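/- arXiv:1009.3772 — 6 statements merged into one kernel-verified Lean document; each statement's English description precedes it below -/
import Mathlib

section
/- Every Laman graph G arises from the complete graph K₂ on two vertices by a finite sequence of moves G₀ → G₁ → ... → G_n = G in which G₀ is isomorphic to K₂ and each step G_k → G_{k+1} is either a Henneberg 1 move or a Henneberg 2 move. -/
open SimpleGraph

noncomputable section

/-- The freedom number `f(H) = 2|V(H)| - |E(H)|` of a subgraph. -/
def subFreedom {V : Type} {G : SimpleGraph V} (H : G.Subgraph) : ℤ :=
  2 * (H.verts.ncard : ℤ) - (H.edgeSet.ncard : ℤ)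

/-- The freedom number `f(G) = 2|V| - |E|` of a graph. -/
def gFreedom {V : Type} (G : SimpleGraph V) : ℤ :=
  2 * ((Set.univ : Set V).ncard : ℤ) - (G.edgeSet.ncard : ℤ)

/-- `G` is independent of type 2: every subgraph (with nonempty vertex set)
has freedom number at least 2. -/
def Indep2 {V : Type} (G : SimpleGraph V) : Prop :=
  ∀ H : G.Subgraph, H.verts.Nonempty → 2 ≤ subFreedom H

/-- `G` is maximally independent of type 2. -/
def MaxIndep2 {V : Type} (G : SimpleGraph V) : Prop := Indep2 G ∧ gFreedom G = 2

/-- `G` is independent of type 3: every subgraph with at least one edge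
has freedom number at least 3. -/
def Indep3 {V : Type} (G : SimpleGraph V) : Prop :=
  ∀ H : G.Subgraph, H.edgeSet.Nonempty → 3 ≤ subFreedom H

/-- `G` is maximally independent of type 3. -/
def MaxIndep3 {V : Type} (G : SimpleGraph V) : Prop := Indep3 G ∧ gFreedom G = 3

/-- A Laman graph: connected and maximally independent of type 3. -/
def Laman {V : Type} (G : SimpleGraph V) : Prop := G.Connected ∧ MaxIndep3 G

/-- Henneberg 1 move: `G'` (on vertex type `β`) is obtained from `G` (on `α`)
via the vertex embedding `φ` by adjoining the new vertex `w` joined to the images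
of two distinct vertices `a`, `b` of `G`. -/
def Henneberg1Rel {α β : Type} (G : SimpleGraph α) (G' : SimpleGraph β)
    (φ : α ↪ β) (w : β) : Prop :=
  (∀ y : β, y ∈ Set.range φ ∨ y = w) ∧ w ∉ Set.range φ ∧
  ∃ a b : α, a ≠ b ∧
    ∀ x y : β, G'.Adj x y ↔
      ((∃ c d : α, G.Adj c d ∧ x = φ c ∧ y = φ d) ∨
       (x = w ∧ (y = φ a ∨ y = φ b)) ∨ (y = w ∧ (x = φ a ∨ x = φ b)))

/-- Henneberg 2 move: `G'` is obtained from `G` by breaking the edge `(u,v)` of `G`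
at the new vertex `w` and adding an edge from `w` to a third vertex `z`. -/
def Henneberg2Rel {α β : Type} (G : SimpleGraph α) (G' : SimpleGraph β)
    (φ : α ↪ β) (w : β) : Prop :=
  (∀ y : β, y ∈ Set.range φ ∨ y = w) ∧ w ∉ Set.range φ ∧
  ∃ u v z : α, G.Adj u v ∧ z ≠ u ∧ z ≠ v ∧
    ∀ x y : β, G'.Adj x y ↔
      ((∃ a b : α, G.Adj a b ∧ ¬ (s(a, b) = s(u, v)) ∧ x = φ a ∧ y = φ b) ∨
       (x = w ∧ (y = φ u ∨ y = φ v ∨ y = φ z)) ∨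
       (y = w ∧ (x = φ u ∨ x = φ v ∨ x = φ z)))

def finCastSuccEmb (n : ℕ) : Fin n ↪ Fin (n + 1) :=
  ⟨Fin.castSucc, Fin.castSucc_injective n⟩

/-- `Derived G0 n G` : the graph `G` on `Fin n` is obtained from the base graph `G0`
by a finite sequence of Henneberg 1 and Henneberg 2 moves. -/
inductive Derived {m : ℕ} (G0 : SimpleGraph (Fin m)) : (n : ℕ) → SimpleGraph (Fin n) → Prop
  | base : Derived G0 m G0
  | h1 {n : ℕ} {G : SimpleGraph (Fin n)} {G' : SimpleGraph (Fin (n + 1))} :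
      Derived G0 n G → Henneberg1Rel G G' (finCastSuccEmb n) (Fin.last n) →
      Derived G0 (n + 1) G'
  | h2 {n : ℕ} {G : SimpleGraph (Fin n)} {G' : SimpleGraph (Fin (n + 1))} :
      Derived G0 n G → Henneberg2Rel G G' (finCastSuccEmb n) (Fin.last n) →
      Derived G0 (n + 1) G'

/-!
Induction on the number of vertices, over graphs that are maximally independent of type 3.
Since `2|V| - |E| = 3`, the degree sum `2|E|` is less than `4|V|`, so some vertex `v` has
degree at most three, and once `|V| ≥ 3` independence forces degree at least two. If `v` has
degree two, deleting it leaves a maximally independent graph, from which `G` is recovered by a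
Henneberg 1 move.

If `v` has degree three, call a set `S ∌ v` small when `f(S) ≤ 3`. The freedom number is
submodular, so two small sets sharing two vertices have a small union, and no small set contains
all three neighbours of `v` (adding `v` would give freedom `≤ 2`). Comparing the small sets
through the three pairs of neighbours (an edge is itself a small set) shows that some
non-adjacent pair `x, y` of neighbours lies in no small set. Then `G - v` plus the edge `xy` is
maximally independent, and `G` is recovered from it by a Henneberg 2 move.
-/

lemma Set.sym2_mono {α : Type*} {s t : Set α} (h : s ⊆ t) : s.sym2 ⊆ t.sym2 :=
  fun _ hz => Set.mem_sym2_iff_subset.2 ((Set.mem_sym2_iff_subset.1 hz).trans h)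

namespace SimpleGraph

variable {V W : Type} {G : SimpleGraph V}

def inducedFreedom (G : SimpleGraph V) (S : Set V) : ℤ :=
  2 * (S.ncard : ℤ) - ((G.edgeSet ∩ S.sym2).ncard : ℤ)

lemma edgeSet_induce_top (S : Set V) :
    ((⊤ : G.Subgraph).induce S).edgeSet = G.edgeSet ∩ S.sym2 := by
  ext e
  induction e using Sym2.inductionOn with
  | hf x y => simp [and_comm, and_assoc]

lemma subFreedom_induce_top (S : Set V) :
    subFreedom ((⊤ : G.Subgraph).induce S) = G.inducedFreedom S := by
  simp [subFreedom, inducedFreedom, edgeSet_induce_top]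

lemma inducedFreedom_le_subFreedom [Finite V] (H : G.Subgraph) :
    G.inducedFreedom H.verts ≤ subFreedom H := by
  have hE := Subgraph.edgeSet_mono H.le_induce_top_verts
  rw [edgeSet_induce_top] at hE
  have := Set.ncard_le_ncard hE (Set.toFinite _)
  unfold subFreedom inducedFreedom
  omega

lemma inducedFreedom_univ : G.inducedFreedom Set.univ = gFreedom G := by
  simp [inducedFreedom, gFreedom]

lemma inducedFreedom_singleton (x : V) : G.inducedFreedom {x} = 2 := by
  simp [inducedFreedom]

lemma inducedFreedom_pair_of_not_adj {x y : V} (hxy : x ≠ y) (h : ¬G.Adj x y) :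
    G.inducedFreedom {x, y} = 4 := by
  have : G.edgeSet ∩ ({x, y} : Set V).sym2 = ∅ := by
    ext e
    induction e using Sym2.inductionOn with
    | hf a b =>
      simp only [Set.mem_inter_iff, mem_edgeSet, Set.mk_mem_sym2_iff, Set.mem_insert_iff,
        Set.mem_singleton_iff, Set.mem_empty_iff_false, iff_false, not_and]
      rintro hab (rfl | rfl) (rfl | rfl) <;> simp_all [adj_comm]
  simp [inducedFreedom, this, Set.ncard_pair hxy]

lemma inducedFreedom_pair_of_adj {x y : V} (h : G.Adj x y) : G.inducedFreedom {x, y} = 3 := by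
  have : G.edgeSet ∩ ({x, y} : Set V).sym2 = {s(x, y)} := by
    ext e
    induction e using Sym2.inductionOn with
    | hf a b =>
      simp only [Set.mem_inter_iff, mem_edgeSet, Set.mk_mem_sym2_iff, Set.mem_insert_iff,
        Set.mem_singleton_iff, Sym2.eq_iff]
      constructor
      · rintro ⟨hab, rfl | rfl, rfl | rfl⟩ <;> simp_all
      · rintro (⟨rfl, rfl⟩ | ⟨rfl, rfl⟩) <;> simp [h, h.symm]
  simp [inducedFreedom, this, Set.ncard_pair h.ne]

lemma inducedFreedom_union_le [Finite V] (A B : Set V) :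
    G.inducedFreedom (A ∪ B) ≤
      G.inducedFreedom A + G.inducedFreedom B - G.inducedFreedom (A ∩ B) := by
  have hsub : (G.edgeSet ∩ A.sym2) ∪ (G.edgeSet ∩ B.sym2) ⊆ G.edgeSet ∩ (A ∪ B).sym2 :=
    Set.union_subset (Set.inter_subset_inter_right _ (Set.sym2_mono Set.subset_union_left))
      (Set.inter_subset_inter_right _ (Set.sym2_mono Set.subset_union_right))
  have hE := Set.ncard_le_ncard hsub (Set.toFinite _)
  have hEi := Set.ncard_union_add_ncard_inter (G.edgeSet ∩ A.sym2) (G.edgeSet ∩ B.sym2)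
    (Set.toFinite _) (Set.toFinite _)
  have hV := Set.ncard_union_add_ncard_inter A B (Set.toFinite _) (Set.toFinite _)
  rw [← Set.inter_inter_distrib_left, ← Set.sym2_inter] at hEi
  unfold inducedFreedom
  omega

lemma inducedFreedom_union_le_of_adj [Finite V] {A B : Set V} {p q : V} (hpq : G.Adj p q)
    (hpA : p ∈ A) (hpB : p ∉ B) (hqA : q ∉ A) (hqB : q ∈ B) :
    G.inducedFreedom (A ∪ B) ≤
      G.inducedFreedom A + G.inducedFreedom B - G.inducedFreedom (A ∩ B) - 1 := by
  have hnot : s(p, q) ∉ (G.edgeSet ∩ A.sym2) ∪ (G.edgeSet ∩ B.sym2) := by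
    simp [hqA, hpB]
  have hsub : insert s(p, q) ((G.edgeSet ∩ A.sym2) ∪ (G.edgeSet ∩ B.sym2)) ⊆
      G.edgeSet ∩ (A ∪ B).sym2 :=
    Set.insert_subset ⟨hpq, Or.inl hpA, Or.inr hqB⟩ <| Set.union_subset
      (Set.inter_subset_inter_right _ (Set.sym2_mono Set.subset_union_left))
      (Set.inter_subset_inter_right _ (Set.sym2_mono Set.subset_union_right))
  have hE := Set.ncard_le_ncard hsub (Set.toFinite _)
  rw [Set.ncard_insert_of_notMem hnot (Set.toFinite _)] at hE
  have hEi := Set.ncard_union_add_ncard_inter (G.edgeSet ∩ A.sym2) (G.edgeSet ∩ B.sym2)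
    (Set.toFinite _) (Set.toFinite _)
  have hV := Set.ncard_union_add_ncard_inter A B (Set.toFinite _) (Set.toFinite _)
  rw [← Set.inter_inter_distrib_left, ← Set.sym2_inter] at hEi
  unfold inducedFreedom
  omega

lemma inducedFreedom_insert_le [Finite V] {S N : Set V} {x : V} (hx : x ∉ S) (hN : N ⊆ S)
    (hadj : ∀ y ∈ N, G.Adj x y) :
    G.inducedFreedom (insert x S) ≤ G.inducedFreedom S + 2 - N.ncard := by
  have hinj : Set.InjOn (fun y => s(x, y)) N := fun _ _ _ _ h => (Sym2.congr_right.1 h)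
  have hdisj : Disjoint ((fun y => s(x, y)) '' N) (G.edgeSet ∩ S.sym2) := by
    rw [Set.disjoint_left]
    rintro e ⟨y, -, rfl⟩ ⟨-, he⟩
    exact hx he.1
  have hsub : (fun y => s(x, y)) '' N ∪ (G.edgeSet ∩ S.sym2) ⊆
      G.edgeSet ∩ (insert x S).sym2 := by
    refine Set.union_subset ?_ (Set.inter_subset_inter_right _
      (Set.sym2_mono (Set.subset_insert _ _)))
    rintro e ⟨y, hy, rfl⟩
    exact ⟨hadj y hy, Set.mem_insert _ _, Set.mem_insert_of_mem _ (hN hy)⟩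
  have hE := Set.ncard_le_ncard hsub (Set.toFinite _)
  rw [Set.ncard_union_eq hdisj (Set.toFinite _) (Set.toFinite _),
    hinj.ncard_image] at hE
  have hV := Set.ncard_insert_of_notMem hx (Set.toFinite S)
  unfold inducedFreedom
  omega

lemma inducedFreedom_compl_singleton [Finite V] (v : V) :
    G.inducedFreedom {v}ᶜ = gFreedom G - 2 + (G.neighborSet v).ncard := by
  classical
  have hsplit : G.edgeSet = (G.edgeSet ∩ ({v}ᶜ : Set V).sym2) ∪ G.incidenceSet v := by
    ext e
    induction e using Sym2.inductionOn with
    | hf x y => by_cases x = v <;> by_cases y = v <;> simp_all [incidenceSet]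
  have hdisj : Disjoint (G.edgeSet ∩ ({v}ᶜ : Set V).sym2) (G.incidenceSet v) := by
    rw [Set.disjoint_left]
    rintro e ⟨-, he⟩ ⟨-, hv⟩
    exact Set.mem_sym2_iff_subset.1 he hv rfl
  have hE : G.edgeSet.ncard =
      (G.edgeSet ∩ ({v}ᶜ : Set V).sym2).ncard + (G.neighborSet v).ncard := by
    rw [← Nat.card_coe_set_eq (G.neighborSet v),
      ← Nat.card_congr (G.incidenceSetEquivNeighborSet v), Nat.card_coe_set_eq,
      ← Set.ncard_union_eq hdisj (Set.toFinite _) (Set.toFinite _), ← hsplit]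
  have hV := Set.ncard_add_ncard_compl {v} (Set.toFinite _) (Set.toFinite _)
  rw [Set.ncard_singleton] at hV
  unfold inducedFreedom gFreedom
  rw [Set.ncard_univ, ← hV]
  omega

lemma inducedFreedom_comap (f : W ↪ V) (T : Set W) :
    (G.comap f).inducedFreedom T = G.inducedFreedom (f '' T) := by
  have hE : G.edgeSet ∩ (f '' T).sym2 = Sym2.map f '' ((G.comap f).edgeSet ∩ T.sym2) := by
    rw [Set.sym2_image, Set.inter_comm, ← Set.image_inter_preimage, Set.inter_comm]
    congr 2
    ext e
    induction e using Sym2.inductionOn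
    rfl
  unfold inducedFreedom
  rw [hE, Set.ncard_image_of_injective _ (Sym2.map.injective f.injective),
    Set.ncard_image_of_injective _ f.injective]

lemma inducedFreedom_sup_edge_of_mem [Finite V] {x y : V} {T : Set V} (hxy : x ≠ y)
    (hnadj : ¬G.Adj x y) (hx : x ∈ T) (hy : y ∈ T) :
    (G ⊔ edge x y).inducedFreedom T = G.inducedFreedom T - 1 := by
  have hE : (G ⊔ edge x y).edgeSet ∩ T.sym2 = insert s(x, y) (G.edgeSet ∩ T.sym2) := by
    rw [edgeSet_sup, edgeSet_edge_of_ne hxy, Set.union_inter_distrib_right,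
      Set.singleton_inter_of_mem (Set.mk_mem_sym2_iff.2 ⟨hx, hy⟩), Set.union_comm,
      Set.singleton_union]
  unfold inducedFreedom
  rw [hE, Set.ncard_insert_of_notMem (fun h => hnadj h.1) (Set.toFinite _)]
  omega

lemma inducedFreedom_sup_edge_of_not_mem {x y : V} {T : Set V} (hxy : ¬(x ∈ T ∧ y ∈ T)) :
    (G ⊔ edge x y).inducedFreedom T = G.inducedFreedom T := by
  have hE : (G ⊔ edge x y).edgeSet ∩ T.sym2 = G.edgeSet ∩ T.sym2 := by
    rw [edgeSet_sup, Set.union_inter_distrib_right, Set.union_eq_left]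
    rintro e ⟨he, hT⟩
    rw [edgeSet_edge_subset he] at hT
    exact (hxy hT).elim
  unfold inducedFreedom
  rw [hE]

lemma adj_iff_sup_edge_adj_and_ne {W : Type} {H : SimpleGraph W} {x y p q : W}
    (hnadj : ¬H.Adj x y) : H.Adj p q ↔ (H ⊔ edge x y).Adj p q ∧ s(p, q) ≠ s(x, y) := by
  refine ⟨fun h => ⟨.inl h, fun hpq => ?_⟩,
    fun ⟨h, hpq⟩ => h.resolve_right fun he => ?_⟩
  · rcases Sym2.eq_iff.1 hpq with ⟨rfl, rfl⟩ | ⟨rfl, rfl⟩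
    exacts [hnadj h, hnadj h.symm]
  · exact hpq ((adj_edge _ _).1 he).1.symm

end SimpleGraph

lemma indep3_of_three_le_inducedFreedom {V : Type} [Finite V] {G : SimpleGraph V}
    (h : ∀ (S : Set V) (x y : V), x ∈ S → y ∈ S → x ≠ y → 3 ≤ G.inducedFreedom S) :
    Indep3 G := by
  rintro H ⟨e, he⟩
  induction e using Sym2.inductionOn with
  | hf x y =>
    have hxy := Subgraph.mem_edgeSet.1 he
    exact (h _ x y hxy.fst_mem hxy.snd_mem hxy.ne).trans (inducedFreedom_le_subFreedom H)

namespace Indep3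

open SimpleGraph

variable {V W : Type} {G : SimpleGraph V}

lemma three_le_inducedFreedom_of_nonempty (hG : Indep3 G) {S : Set V}
    (hS : (G.edgeSet ∩ S.sym2).Nonempty) : 3 ≤ G.inducedFreedom S := by
  rw [← subFreedom_induce_top]
  exact hG _ (by rwa [edgeSet_induce_top])

variable [Finite V]

lemma three_le_inducedFreedom (hG : Indep3 G) {S : Set V} {x y : V} (hx : x ∈ S)
    (hy : y ∈ S) (hxy : x ≠ y) : 3 ≤ G.inducedFreedom S := by
  rcases (G.edgeSet ∩ S.sym2).eq_empty_or_nonempty with hE | hE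
  · have := Set.ncard_pair hxy ▸ Set.ncard_le_ncard (Set.pair_subset hx hy) S.toFinite
    simp only [inducedFreedom, hE, Set.ncard_empty]
    omega
  · exact hG.three_le_inducedFreedom_of_nonempty hE

lemma comap (hG : Indep3 G) (f : W ↪ V) : Indep3 (G.comap f) := by
  have := Finite.of_injective f f.injective
  refine indep3_of_three_le_inducedFreedom fun T x y hx hy hxy => ?_
  rw [inducedFreedom_comap]
  exact hG.three_le_inducedFreedom (Set.mem_image_of_mem f hx) (Set.mem_image_of_mem f hy)
    (f.injective.ne hxy)

lemma four_le_inducedFreedom_of_adj (hG : Indep3 G) {v a b c : V} {S : Set V} (hv : v ∉ S)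
    (ha : a ∈ S) (hb : b ∈ S) (hc : c ∈ S) (hab : a ≠ b) (hac : a ≠ c) (hbc : b ≠ c)
    (hva : G.Adj v a) (hvb : G.Adj v b) (hvc : G.Adj v c) : 4 ≤ G.inducedFreedom S := by
  have hN : ({a, b, c} : Set V) ⊆ S := Set.insert_subset ha (Set.pair_subset hb hc)
  have hins := inducedFreedom_insert_le (G := G) hv hN (by simp [hva, hvb, hvc])
  rw [Set.ncard_eq_three.2 ⟨a, b, c, hab, hac, hbc, rfl⟩] at hins
  have := hG.three_le_inducedFreedom (Set.mem_insert v S) (Set.mem_insert_of_mem v ha) hva.ne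
  omega

lemma inducedFreedom_union_le_three (hG : Indep3 G) {A B : Set V} {x y : V}
    (hA : G.inducedFreedom A ≤ 3) (hB : G.inducedFreedom B ≤ 3) (hx : x ∈ A ∩ B)
    (hy : y ∈ A ∩ B) (hxy : x ≠ y) : G.inducedFreedom (A ∪ B) ≤ 3 := by
  linarith [inducedFreedom_union_le (G := G) A B, hG.three_le_inducedFreedom hx hy hxy]

lemma false_of_small_sets_through_pairs (hG : Indep3 G) {v a b c : V} {A B C : Set V}
    (hab : a ≠ b) (hac : a ≠ c) (hbc : b ≠ c)
    (hva : G.Adj v a) (hvb : G.Adj v b) (hvc : G.Adj v c)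
    (hvA : v ∉ A) (haA : a ∈ A) (hbA : b ∈ A) (hA : G.inducedFreedom A ≤ 3)
    (hvB : v ∉ B) (haB : a ∈ B) (hcB : c ∈ B) (hB : G.inducedFreedom B ≤ 3)
    (hvC : v ∉ C) (hbC : b ∈ C) (hcC : c ∈ C) (hC : G.inducedFreedom C ≤ 3) : False := by
  have big : ∀ S, v ∉ S → a ∈ S → b ∈ S → c ∈ S → 3 < G.inducedFreedom S :=
    fun S hv ha hb hc => hG.four_le_inducedFreedom_of_adj hv ha hb hc hab hac hbc hva hvb hvc
  have inter_eq : ∀ {S T : Set V} {r : V}, v ∉ S → v ∉ T →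
      G.inducedFreedom S ≤ 3 → G.inducedFreedom T ≤ 3 → r ∈ S ∩ T →
      a ∈ S ∪ T → b ∈ S ∪ T → c ∈ S ∪ T → S ∩ T = {r} := by
    intro S T r hvS hvT hS hT hr ha hb hc
    refine Set.eq_singleton_iff_unique_mem.2 ⟨hr, fun x hx => ?_⟩
    by_contra hxr
    have := hG.inducedFreedom_union_le_three hS hT hx hr hxr
    linarith [big _ (by simp [hvS, hvT]) ha hb hc]
  have hAB : A ∩ B = {a} :=
    inter_eq hvA hvB hA hB ⟨haA, haB⟩ (.inl haA) (.inl hbA) (.inr hcB)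
  have hAC : A ∩ C = {b} :=
    inter_eq hvA hvC hA hC ⟨hbA, hbC⟩ (.inl haA) (.inl hbA) (.inr hcC)
  have hBC : B ∩ C = {c} :=
    inter_eq hvB hvC hB hC ⟨hcB, hcC⟩ (.inl haB) (.inr hbC) (.inl hcB)
  have hvAB : v ∉ A ∪ B := by simp [hvA, hvB]
  by_cases hadj : G.Adj b c
  · have hbB : b ∉ B := fun h => hab (hAB.subset ⟨hbA, h⟩).symm
    have hcA : c ∉ A := fun h => hac (hAB.subset ⟨h, hcB⟩).symm
    have := inducedFreedom_union_le_of_adj hadj hbA hbB hcA hcB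
    rw [hAB, inducedFreedom_singleton] at this
    linarith [big _ hvAB (.inl haA) (.inl hbA) (.inr hcB)]
  · have hABC : (A ∪ B) ∩ C = {b, c} := by
      rw [Set.union_inter_distrib_right, hAC, hBC, Set.singleton_union]
    have h1 := inducedFreedom_union_le (G := G) A B
    have h2 := inducedFreedom_union_le (G := G) (A ∪ B) C
    rw [hAB, inducedFreedom_singleton] at h1
    rw [hABC, inducedFreedom_pair_of_not_adj hbc hadj] at h2
    linarith [big (A ∪ B ∪ C) (by simp [hvA, hvB, hvC]) (.inl (.inl haA)) (.inl (.inl hbA))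
      (.inr hcC)]

/-- The pair `x, y` is the edge restored by the reverse Henneberg 2 move: the bound `4 ≤ f(S)`
is what keeps `G - v` plus the edge `xy` independent. -/
lemma exists_free_pair (hG : Indep3 G) {v a b c : V} (hab : a ≠ b) (hac : a ≠ c)
    (hbc : b ≠ c) (hnbr : G.neighborSet v = {a, b, c}) :
    ∃ x y z : V, x ≠ y ∧ x ≠ z ∧ y ≠ z ∧ G.neighborSet v = {x, y, z} ∧
      ¬G.Adj x y ∧ ∀ S, v ∉ S → x ∈ S → y ∈ S → 4 ≤ G.inducedFreedom S := by
  have hadj : ∀ t, G.Adj v t ↔ t = a ∨ t = b ∨ t = c := fun t => by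
    rw [← mem_neighborSet, hnbr]; rfl
  by_contra! h
  have small : ∀ x y z : V, x ≠ y → x ≠ z → y ≠ z → G.neighborSet v = {x, y, z} →
      ∃ S : Set V, v ∉ S ∧ x ∈ S ∧ y ∈ S ∧ G.inducedFreedom S ≤ 3 := by
    intro x y z hxy hxz hyz hxyz
    have hvx : G.Adj v x := by rw [← mem_neighborSet, hxyz]; simp
    have hvy : G.Adj v y := by rw [← mem_neighborSet, hxyz]; simp
    by_cases hx : G.Adj x y
    · refine ⟨{x, y}, ?_, by simp, by simp, (inducedFreedom_pair_of_adj hx).le⟩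
      simp [hvx.ne, hvy.ne]
    · obtain ⟨S, hvS, hxS, hyS, hS⟩ := h x y z hxy hxz hyz hxyz hx
      exact ⟨S, hvS, hxS, hyS, by omega⟩
  obtain ⟨A, hvA, haA, hbA, hA⟩ := small a b c hab hac hbc hnbr
  obtain ⟨B, hvB, haB, hcB, hB⟩ := small a c b hac hab hbc.symm
    (by rw [hnbr, Set.pair_comm])
  obtain ⟨C, hvC, hbC, hcC, hC⟩ := small b c a hbc hab.symm hac.symm
    (by rw [hnbr, Set.insert_comm, Set.pair_comm, Set.insert_comm])
  exact hG.false_of_small_sets_through_pairs hab hac hbc ((hadj a).2 (by simp))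
    ((hadj b).2 (by simp)) ((hadj c).2 (by simp)) hvA haA hbA hA hvB haB hcB hB hvC hbC hcC hC

end Indep3

lemma range_subtype_ne {V : Type} (v : V) :
    Set.range (Function.Embedding.subtype (· ≠ v)) = {v}ᶜ := by
  ext; simp

namespace MaxIndep3

open SimpleGraph

variable {V : Type} {G : SimpleGraph V}

lemma two_le_card (hG : MaxIndep3 G) : 2 ≤ Nat.card V := by
  have h := hG.2
  unfold gFreedom at h
  rw [Set.ncard_univ] at h
  omega

lemma eq_top_of_card_eq_two [Finite V] (hG : MaxIndep3 G) (hV : Nat.card V = 2) : G = ⊤ := by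
  ext s t
  refine ⟨Adj.ne, fun hst => ?_⟩
  by_contra hadj
  have huniv : ({s, t} : Set V) = Set.univ :=
    Set.eq_of_subset_of_ncard_le (Set.subset_univ _)
      (by rw [Set.ncard_univ, hV, Set.ncard_pair hst])
  have := inducedFreedom_pair_of_not_adj hst hadj
  rw [huniv, inducedFreedom_univ, hG.2] at this
  omega

lemma two_le_ncard_neighborSet [Finite V] (hG : MaxIndep3 G) (hV : 3 ≤ Nat.card V) (v : V) :
    2 ≤ (G.neighborSet v).ncard := by
  have hcompl : 1 < ({v}ᶜ : Set V).ncard := by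
    rw [Set.ncard_compl, Set.ncard_singleton]
    omega
  obtain ⟨a, b, ha, hb, hab⟩ := (Set.one_lt_ncard_iff).1 hcompl
  have := hG.1.three_le_inducedFreedom ha hb hab
  rw [inducedFreedom_compl_singleton, hG.2] at this
  omega

lemma exists_ncard_neighborSet_le_three [Finite V] (hG : MaxIndep3 G) :
    ∃ v : V, (G.neighborSet v).ncard ≤ 3 := by
  classical
  have := Fintype.ofFinite V
  by_contra! h
  have hdeg : ∀ v, 4 ≤ G.degree v := fun v => by
    rw [← card_neighborSet_eq_degree, ← Nat.card_eq_fintype_card, Nat.card_coe_set_eq]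
    exact h v
  have hsum : 4 * Fintype.card V ≤ 2 * G.edgeFinset.card := by
    rw [← sum_degrees_eq_twice_card_edges, mul_comm, ← Finset.card_univ, ← smul_eq_mul,
      ← Finset.sum_const]
    exact Finset.sum_le_sum fun v _ => hdeg v
  have hE : G.edgeFinset.card = G.edgeSet.ncard := (Set.ncard_eq_toFinset_card' _).symm
  have h3 := hG.2
  unfold gFreedom at h3
  rw [Set.ncard_univ, Nat.card_eq_fintype_card] at h3
  omega

lemma comap_subtype_ne [Finite V] (hG : MaxIndep3 G) {v : V}
    (hv : (G.neighborSet v).ncard = 2) :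
    MaxIndep3 (G.comap (Function.Embedding.subtype (· ≠ v))) := by
  refine ⟨hG.1.comap _, ?_⟩
  rw [← inducedFreedom_univ, inducedFreedom_comap, Set.image_univ, range_subtype_ne,
    inducedFreedom_compl_singleton, hG.2, hv]
  norm_num

lemma comap_subtype_ne_sup_edge [Finite V] (hG : MaxIndep3 G) {v : V}
    (hv : (G.neighborSet v).ncard = 3) {x y : {t // t ≠ v}} (hxy : x ≠ y) (hnadj : ¬G.Adj x y)
    (hfree : ∀ S : Set V, v ∉ S → ↑x ∈ S → ↑y ∈ S → 4 ≤ G.inducedFreedom S) :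
    MaxIndep3 (G.comap (Function.Embedding.subtype (· ≠ v)) ⊔ edge x y) := by
  refine ⟨indep3_of_three_le_inducedFreedom fun T p q hp hq hpq => ?_, ?_⟩
  · have hvT : v ∉ Subtype.val '' T := fun ⟨t, _, ht⟩ => t.2 ht
    by_cases hT : x ∈ T ∧ y ∈ T
    · rw [inducedFreedom_sup_edge_of_mem hxy hnadj hT.1 hT.2, inducedFreedom_comap,
        Function.Embedding.coe_subtype]
      linarith [hfree _ hvT (Set.mem_image_of_mem _ hT.1) (Set.mem_image_of_mem _ hT.2)]
    · rw [inducedFreedom_sup_edge_of_not_mem hT, inducedFreedom_comap]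
      exact hG.1.three_le_inducedFreedom (Set.mem_image_of_mem _ hp)
        (Set.mem_image_of_mem _ hq) (Subtype.val_injective.ne hpq)
  · rw [← inducedFreedom_univ, inducedFreedom_sup_edge_of_mem hxy hnadj (Set.mem_univ _)
      (Set.mem_univ _), inducedFreedom_comap, Set.image_univ, range_subtype_ne,
      inducedFreedom_compl_singleton, hG.2, hv]
    norm_num

end MaxIndep3

section Henneberg

variable {α β : Type} {G : SimpleGraph α} {G' : SimpleGraph β} {φ : α ↪ β} {w : β}

lemma henneberg1Rel_of_adj (hcov : ∀ y, y ∈ Set.range φ ∨ y = w) (hw : w ∉ Set.range φ)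
    {a b : α} (hab : a ≠ b) (hφ : ∀ c d, G'.Adj (φ c) (φ d) ↔ G.Adj c d)
    (hwφ : ∀ c, G'.Adj w (φ c) ↔ c = a ∨ c = b) : Henneberg1Rel G G' φ w := by
  have hne : ∀ c, φ c ≠ w := fun c h => hw ⟨c, h⟩
  have hφw : ∀ c, G'.Adj (φ c) w ↔ c = a ∨ c = b := fun c =>
    G'.adj_comm _ _ |>.trans (hwφ c)
  refine ⟨hcov, hw, a, b, hab, fun x y => ?_⟩
  rcases hcov x with ⟨c, rfl⟩ | rfl <;> rcases hcov y with ⟨d, rfl⟩ | rfl <;>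
    simp [hφ, hwφ, hφw, hne, (hne _).symm]

lemma henneberg2Rel_of_adj (hcov : ∀ y, y ∈ Set.range φ ∨ y = w) (hw : w ∉ Set.range φ)
    {u v z : α} (huv : G.Adj u v) (hzu : z ≠ u) (hzv : z ≠ v)
    (hφ : ∀ c d, G'.Adj (φ c) (φ d) ↔ G.Adj c d ∧ s(c, d) ≠ s(u, v))
    (hwφ : ∀ c, G'.Adj w (φ c) ↔ c = u ∨ c = v ∨ c = z) : Henneberg2Rel G G' φ w := by
  have hne : ∀ c, φ c ≠ w := fun c h => hw ⟨c, h⟩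
  have hφw : ∀ c, G'.Adj (φ c) w ↔ c = u ∨ c = v ∨ c = z := fun c =>
    G'.adj_comm _ _ |>.trans (hwφ c)
  refine ⟨hcov, hw, u, v, z, huv, hzu, hzv, fun x y => ?_⟩
  rcases hcov x with ⟨c, rfl⟩ | rfl <;> rcases hcov y with ⟨d, rfl⟩ | rfl <;>
    simp [hφ, hwφ, hφw, hne, (hne _).symm]

end Henneberg

lemma finCastSuccEmb_range_or_eq_last (n : ℕ) (y : Fin (n + 1)) :
    y ∈ Set.range (finCastSuccEmb n) ∨ y = Fin.last n :=
  (Fin.eq_castSucc_or_eq_last y).imp (fun ⟨j, hj⟩ => ⟨j, hj.symm⟩) id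

lemma last_notMem_range_finCastSuccEmb (n : ℕ) : Fin.last n ∉ Set.range (finCastSuccEmb n) :=
  fun ⟨j, hj⟩ => Fin.castSucc_ne_last j hj

lemma exists_iso_castSucc_last {V : Type} (G : SimpleGraph V) (v : V) {n : ℕ}
    (e : {t // t ≠ v} ≃ Fin n) :
    ∃ G' : SimpleGraph (Fin (n + 1)), Nonempty (G ≃g G') ∧
      (∀ p q : {t // t ≠ v}, G'.Adj (e p).castSucc (e q).castSucc ↔ G.Adj p q) ∧
      ∀ p : {t // t ≠ v}, G'.Adj (Fin.last n) (e p).castSucc ↔ G.Adj v p := by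
  classical
  let E : V ≃ Fin (n + 1) :=
    (Equiv.optionSubtypeNe v).symm.trans ((Equiv.optionCongr e).trans finSuccEquivLast.symm)
  have hE : ∀ p : {t // t ≠ v}, E p = (e p).castSucc := fun p => by
    simp [E, Equiv.optionSubtypeNe_symm_of_ne p.2]
  have hEv : E v = Fin.last n := by simp [E]
  let f : G ≃g G.comap E.symm := ⟨E, by simp⟩
  refine ⟨_, ⟨f⟩, fun p q => ?_, fun p => ?_⟩
  · rw [← hE, ← hE]
    exact f.map_adj_iff
  · rw [← hE, ← hEv]
    exact f.map_adj_iff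

def HennebergConstructible {V : Type} (G : SimpleGraph V) : Prop :=
  ∃ (n : ℕ) (G' : SimpleGraph (Fin n)),
    Derived (⊤ : SimpleGraph (Fin 2)) n G' ∧ Nonempty (G ≃g G')

namespace HennebergConstructible

variable {V : Type} {G : SimpleGraph V} {v : V}

lemma of_iso {W : Type} {H : SimpleGraph W} (hG : HennebergConstructible G) (e : G ≃g H) :
    HennebergConstructible H := by
  obtain ⟨n, G', hder, ⟨f⟩⟩ := hG
  exact ⟨n, G', hder, ⟨e.symm.trans f⟩⟩

lemma top_fin_two : HennebergConstructible (⊤ : SimpleGraph (Fin 2)) :=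
  ⟨2, ⊤, .base, ⟨.refl⟩⟩

lemma of_henneberg1
    (hK : HennebergConstructible (G.comap (Function.Embedding.subtype (· ≠ v))))
    {a b : {t // t ≠ v}} (hab : a ≠ b) (hnbr : G.neighborSet v = {↑a, ↑b}) :
    HennebergConstructible G := by
  obtain ⟨n, K, hder, ⟨e⟩⟩ := hK
  obtain ⟨G', ⟨f⟩, hcast, hlast⟩ := exists_iso_castSucc_last G v e.toEquiv
  simp only [RelIso.coe_fn_toEquiv] at hcast hlast
  refine ⟨n + 1, G', hder.h1 (henneberg1Rel_of_adj (finCastSuccEmb_range_or_eq_last n)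
    (last_notMem_range_finCastSuccEmb n) (e.injective.ne hab) (fun p q => ?_) fun p => ?_),
    ⟨f⟩⟩
  · obtain ⟨p, rfl⟩ := e.surjective p
    obtain ⟨q, rfl⟩ := e.surjective q
    exact (hcast p q).trans e.map_adj_iff.symm
  · obtain ⟨p, rfl⟩ := e.surjective p
    refine (hlast p).trans ?_
    rw [← mem_neighborSet, hnbr]
    simp only [Set.mem_insert_iff, Set.mem_singleton_iff, ← Subtype.ext_iff,
      EmbeddingLike.apply_eq_iff_eq]

lemma of_henneberg2 {K : SimpleGraph {t // t ≠ v}} (hK : HennebergConstructible K)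
    {x y z : {t // t ≠ v}} (hxy : K.Adj x y) (hzx : z ≠ x) (hzy : z ≠ y)
    (hGK : ∀ p q : {t // t ≠ v}, G.Adj p q ↔ K.Adj p q ∧ s(p, q) ≠ s(x, y))
    (hnbr : G.neighborSet v = {↑x, ↑y, ↑z}) :
    HennebergConstructible G := by
  obtain ⟨n, K', hder, ⟨e⟩⟩ := hK
  obtain ⟨G', ⟨f⟩, hcast, hlast⟩ := exists_iso_castSucc_last G v e.toEquiv
  simp only [RelIso.coe_fn_toEquiv] at hcast hlast
  refine ⟨n + 1, G', hder.h2 (henneberg2Rel_of_adj (finCastSuccEmb_range_or_eq_last n)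
    (last_notMem_range_finCastSuccEmb n) (e.map_adj_iff.2 hxy) (e.injective.ne hzx)
    (e.injective.ne hzy) (fun p q => ?_) fun p => ?_), ⟨f⟩⟩
  · obtain ⟨p, rfl⟩ := e.surjective p
    obtain ⟨q, rfl⟩ := e.surjective q
    refine (hcast p q).trans ((hGK p q).trans (and_congr e.map_adj_iff.symm ?_))
    rw [← Sym2.map_mk, ← Sym2.map_mk, (Sym2.map.injective e.injective).ne_iff]
  · obtain ⟨p, rfl⟩ := e.surjective p
    refine (hlast p).trans ?_
    rw [← mem_neighborSet, hnbr]
    simp only [Set.mem_insert_iff, Set.mem_singleton_iff, ← Subtype.ext_iff,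
      EmbeddingLike.apply_eq_iff_eq]

end HennebergConstructible

theorem MaxIndep3.hennebergConstructible {V : Type} [Finite V] {G : SimpleGraph V}
    (hG : MaxIndep3 G) : HennebergConstructible G := by
  induction hN : Nat.card V generalizing V with
  | zero => have := hG.two_le_card; omega
  | succ N ih =>
    rcases hG.two_le_card.eq_or_lt with h2 | h3
    · obtain rfl := hG.eq_top_of_card_eq_two h2.symm
      exact HennebergConstructible.top_fin_two.of_iso
        (Iso.completeGraph (Finite.equivFinOfCardEq h2.symm).symm)
    obtain ⟨v, hv3⟩ := hG.exists_ncard_neighborSet_le_three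
    have hv2 := hG.two_le_ncard_neighborSet (by omega) v
    have hcard : Nat.card {t // t ≠ v} = N := by
      change Nat.card ({v}ᶜ : Set V) = N
      rw [Nat.card_coe_set_eq, Set.ncard_compl, Set.ncard_singleton]
      omega
    have hne : ∀ t ∈ G.neighborSet v, t ≠ v := fun t ht => ((mem_neighborSet _ _ _).1 ht).ne'
    interval_cases hdeg : (G.neighborSet v).ncard
    · obtain ⟨a, b, hab, hnbr⟩ := Set.ncard_eq_two.1 hdeg
      have ha := hne a (by simp [hnbr])
      have hb := hne b (by simp [hnbr])
      exact .of_henneberg1 (ih (hG.comap_subtype_ne hdeg) hcard)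
        (a := ⟨a, ha⟩) (b := ⟨b, hb⟩) (by simpa using hab) hnbr
    · obtain ⟨a, b, c, hab, hac, hbc, hnbr⟩ := Set.ncard_eq_three.1 hdeg
      obtain ⟨x, y, z, hxy, hxz, hyz, hnbr, hnadj, hfree⟩ :=
        hG.1.exists_free_pair hab hac hbc hnbr
      have hx := hne x (by simp [hnbr])
      have hy := hne y (by simp [hnbr])
      have hz := hne z (by simp [hnbr])
      have hxy' : (⟨x, hx⟩ : {t // t ≠ v}) ≠ ⟨y, hy⟩ := by simpa using hxy
      exact .of_henneberg2 (ih (hG.comap_subtype_ne_sup_edge hdeg hxy' hnadj hfree) hcard)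
        (z := ⟨z, hz⟩) (.inr ((edge_adj _ _ _ _).2 ⟨.inl ⟨rfl, rfl⟩, hxy'⟩))
        (by simpa using hxz.symm) (by simpa using hyz.symm)
        (fun _ _ => adj_iff_sup_edge_adj_and_ne (H := G.comap (Function.Embedding.subtype _))
          hnadj) hnbr

/-- Every Laman graph arises from the complete graph `K₂` by
a finite sequence of Henneberg 1 and Henneberg 2 moves. -/
theorem laman_derived_from_K2 {V : Type} [Fintype V] (G : SimpleGraph V)
    (hG : Laman G) :
    ∃ (n : ℕ) (G' : SimpleGraph (Fin n)),
      Derived (⊤ : SimpleGraph (Fin 2)) n G' ∧ Nonempty (G ≃g G') :=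
  hG.2.hennebergConstructible
end
end

section
/- Let r = 2 or r = 3 and let G be a graph that is independent of type r. Let G₁ and G₂ be subgraphs of G, each maximally independent of type r, such that V(G₁) ∩ V(G₂) ≠ ∅ and f(G₁ ∩ G₂) ≥ r, where G₁ ∩ G₂ = (V(G₁) ∩ V(G₂), E(G₁) ∩ E(G₂)). Then the union G₁ ∪ G₂ = (V(G₁) ∪ V(G₂), E(G₁) ∪ E(G₂)) is maximally independent of type r. -/
open SimpleGraph

noncomputable section

/-- A subgraph `K` of `G` is independent of type `r` (for `r = 2` or `r = 3`):
every subgraph `H ≤ K` (with nonempty vertex set, and with at least one edge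
in case `r = 3`) has freedom number at least `r`. -/
def SubIndepT {V : Type} {G : SimpleGraph V} (r : ℕ) (K : G.Subgraph) : Prop :=
  ∀ H : G.Subgraph, H ≤ K → H.verts.Nonempty → (r = 3 → H.edgeSet.Nonempty) →
    (r : ℤ) ≤ subFreedom H

/-- A subgraph `K` of `G` is maximally independent of type `r`. -/
def SubMaxIndepT {V : Type} {G : SimpleGraph V} (r : ℕ) (K : G.Subgraph) : Prop :=
  SubIndepT r K ∧ subFreedom K = (r : ℤ)

/-- If `G` is independent of type `r` (`r = 2` or `3`), `G₁`, `G₂`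
are maximally independent subgraphs of type `r` with intersecting vertex sets and
`f(G₁ ⊓ G₂) ≥ r`, then `G₁ ⊔ G₂` is maximally independent of type `r`. -/
theorem union_maxIndep {V : Type} [Fintype V] {G : SimpleGraph V} (r : ℕ)
    (hr : r = 2 ∨ r = 3) (hG : SubIndepT r (⊤ : G.Subgraph))
    (G₁ G₂ : G.Subgraph) (h1 : SubMaxIndepT r G₁) (h2 : SubMaxIndepT r G₂)
    (hne : ((G₁ ⊓ G₂).verts).Nonempty)
    (hint : (r : ℤ) ≤ subFreedom (G₁ ⊓ G₂)) :
    SubMaxIndepT r (G₁ ⊔ G₂) := by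
  obtain ⟨hi1, hf1⟩ := h1
  obtain ⟨hi2, hf2⟩ := h2
  have hV : ((G₁ ⊔ G₂).verts.ncard : ℤ) + ((G₁ ⊓ G₂).verts.ncard : ℤ)
      = (G₁.verts.ncard : ℤ) + (G₂.verts.ncard : ℤ) := by
    rw [Subgraph.verts_sup, Subgraph.verts_inf]
    exact_mod_cast Set.ncard_union_add_ncard_inter G₁.verts G₂.verts
  have hE : ((G₁ ⊔ G₂).edgeSet.ncard : ℤ) + ((G₁ ⊓ G₂).edgeSet.ncard : ℤ)
      = (G₁.edgeSet.ncard : ℤ) + (G₂.edgeSet.ncard : ℤ) := by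
    rw [Subgraph.edgeSet_sup, Subgraph.edgeSet_inf]
    exact_mod_cast Set.ncard_union_add_ncard_inter G₁.edgeSet G₂.edgeSet
  have hkey : subFreedom (G₁ ⊔ G₂) + subFreedom (G₁ ⊓ G₂)
      = subFreedom G₁ + subFreedom G₂ := by
    unfold subFreedom; linarith
  have hub : subFreedom (G₁ ⊔ G₂) ≤ (r : ℤ) := by
    rw [hf1, hf2] at hkey; linarith
  have hvne : (G₁ ⊔ G₂).verts.Nonempty := by
    obtain ⟨v, hv⟩ := hne
    exact ⟨v, Or.inl hv.1⟩
  have hene : r = 3 → (G₁ ⊔ G₂).edgeSet.Nonempty := by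
    intro h3
    by_contra hemp
    rw [Set.not_nonempty_iff_eq_empty] at hemp
    have h1e : G₁.edgeSet = ∅ := by
      rw [Subgraph.edgeSet_sup] at hemp
      exact (Set.union_empty_iff.mp hemp).1
    have : subFreedom G₁ = 2 * (G₁.verts.ncard : ℤ) := by
      unfold subFreedom; rw [h1e]; simp
    rw [hf1, h3] at this
    omega
  have hlb : (r : ℤ) ≤ subFreedom (G₁ ⊔ G₂) := hG _ le_top hvne hene
  refine ⟨fun H hH hHv hHe => hG H le_top hHv hHe, le_antisymm hub hlb⟩
end
end

section
/- Let G be a maximally independent graph of type 3 possessing a vertex v of degree 3. Then there exists a maximally independent graph G' of type 3 and a Henneberg 2 move G' → G whose new vertex is v (that is, G is obtained from G' by a Henneberg 2 move). -/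
open SimpleGraph

noncomputable section

/-! Deleting `v` and joining two of its neighbours `x, y` reverses a Henneberg 2 move and
keeps `2|V| - |E| = 3`; the new graph is independent unless `x` and `y` lie in a common tight
subgraph (freedom number 3) avoiding `v`. The freedom number is modular for `⊔` and `⊓` of
subgraphs, and a subgraph avoiding `v` but containing all three neighbours has freedom at
least 4, since gluing `v` back lowers it by 1. So tight subgraphs `B₁ ∋ x, y`, `B₂ ∋ y, z`,
`B₃ ∋ x, z` cannot all exist: `B₁ ⊓ B₂` is edgeless, hence `f (B₁ ⊔ B₂) ≤ 4`; then
`(B₁ ⊔ B₂) ⊓ B₃` is edgeless and contains `x ≠ z`, so `f (B₁ ⊔ B₂ ⊔ B₃) ≤ 4 + 3 - 4 = 3`. -/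

section Freedom

variable {V : Type} {G : SimpleGraph V}

lemma subFreedom_of_edgeSet_eq_empty {H : G.Subgraph} (h : H.edgeSet = ∅) :
    subFreedom H = 2 * H.verts.ncard := by
  simp [subFreedom, h]

lemma subFreedom_subgraphOfAdj {a b : V} (h : G.Adj a b) :
    subFreedom (G.subgraphOfAdj h) = 3 := by
  simp [subFreedom, Set.ncard_pair h.ne]

lemma subFreedom_map {W : Type} {G' : SimpleGraph W} (f : G ↪g G') (H : G.Subgraph) :
    subFreedom (H.map f.toHom) = subFreedom H := by
  have hf : Function.Injective f.toHom := f.injective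
  rw [subFreedom, subFreedom, Subgraph.map_verts, Subgraph.edgeSet_map,
    Set.ncard_image_of_injective _ hf, Set.ncard_image_of_injective _ (Sym2.map.injective hf)]

lemma gFreedom_eq_subFreedom_top : gFreedom G = subFreedom (⊤ : G.Subgraph) := rfl

variable [Finite V]

lemma subFreedom_sup_add_subFreedom_inf (H₁ H₂ : G.Subgraph) :
    subFreedom (H₁ ⊔ H₂) + subFreedom (H₁ ⊓ H₂) = subFreedom H₁ + subFreedom H₂ := by
  have hV := Set.ncard_union_add_ncard_inter H₁.verts H₂.verts
  have hE := Set.ncard_union_add_ncard_inter H₁.edgeSet H₂.edgeSet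
  simp only [subFreedom, Subgraph.verts_sup, Subgraph.verts_inf, Subgraph.edgeSet_sup,
    Subgraph.edgeSet_inf]
  omega

lemma Indep3.three_le_subFreedom (hG : Indep3 G) {H : G.Subgraph} {a b : V} (hab : a ≠ b)
    (ha : a ∈ H.verts) (hb : b ∈ H.verts) : 3 ≤ subFreedom H := by
  by_cases hE : H.edgeSet.Nonempty
  · exact hG H hE
  · rw [subFreedom_of_edgeSet_eq_empty (Set.not_nonempty_iff_eq_empty.1 hE)]
    have := Set.ncard_le_ncard (Set.pair_subset ha hb)
    rw [Set.ncard_pair hab] at this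
    omega

end Freedom

namespace SimpleGraph

variable {V : Type} {G : SimpleGraph V} {v : V}

def incidenceSubgraph (G : SimpleGraph V) (v : V) : G.Subgraph where
  verts := insert v (G.neighborSet v)
  Adj a b := G.Adj a b ∧ (a = v ∨ b = v)
  adj_sub h := h.1
  edge_vert := by
    rintro a b ⟨hab, rfl | rfl⟩
    · exact Set.mem_insert _ _
    · exact Set.mem_insert_of_mem _ hab.symm
  symm := ⟨fun _ _ ⟨hab, h⟩ => ⟨hab.symm, h.symm⟩⟩

lemma edgeSet_incidenceSubgraph (G : SimpleGraph V) (v : V) :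
    (G.incidenceSubgraph v).edgeSet = G.incidenceSet v := by
  ext e
  induction e using Sym2.ind with
  | _ a b => simp [incidenceSubgraph, incidenceSet, eq_comm]

variable [Finite V]

lemma subFreedom_incidenceSubgraph :
    subFreedom (G.incidenceSubgraph v) = (G.neighborSet v).ncard + 2 := by
  classical
  have hE : (G.incidenceSet v).ncard = (G.neighborSet v).ncard :=
    Nat.card_congr (G.incidenceSetEquivNeighborSet v)
  have hV : (insert v (G.neighborSet v)).ncard = (G.neighborSet v).ncard + 1 :=
    Set.ncard_insert_of_notMem G.notMem_neighborSet_self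
  rw [subFreedom, edgeSet_incidenceSubgraph, hE]
  change 2 * ((insert v (G.neighborSet v)).ncard : ℤ) - _ = _
  rw [hV]
  push_cast
  ring

lemma subFreedom_sup_incidenceSubgraph {U : G.Subgraph} (hvU : v ∉ U.verts)
    (hNU : G.neighborSet v ⊆ U.verts) :
    subFreedom (U ⊔ G.incidenceSubgraph v) = subFreedom U + 2 - (G.neighborSet v).ncard := by
  have hinf : (U ⊓ G.incidenceSubgraph v).edgeSet = ∅ := by
    rw [Subgraph.edgeSet_inf, edgeSet_incidenceSubgraph, Set.eq_empty_iff_forall_notMem]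
    rintro e ⟨he, -, hve⟩
    exact hvU (U.mem_verts_of_mem_edge he hve)
  have hverts : (U ⊓ G.incidenceSubgraph v).verts = G.neighborSet v := by
    change U.verts ∩ insert v (G.neighborSet v) = _
    rw [Set.inter_insert_of_notMem hvU, Set.inter_eq_right.2 hNU]
  have := subFreedom_sup_add_subFreedom_inf U (G.incidenceSubgraph v)
  rw [subFreedom_of_edgeSet_eq_empty hinf, hverts, subFreedom_incidenceSubgraph] at this
  linarith

end SimpleGraph

section DegreeThree

variable {V : Type} [Finite V] {G : SimpleGraph V} {v : V}

lemma Indep3.ncard_neighborSet_add_one_le_subFreedom (hG : Indep3 G)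
    (hv : (G.neighborSet v).Nonempty) {U : G.Subgraph} (hvU : v ∉ U.verts)
    (hNU : G.neighborSet v ⊆ U.verts) : (G.neighborSet v).ncard + 1 ≤ subFreedom U := by
  obtain ⟨w, hw⟩ := hv
  have := hG (U ⊔ G.incidenceSubgraph v) ⟨s(v, w), Or.inr ⟨hw, Or.inl rfl⟩⟩
  rw [subFreedom_sup_incidenceSubgraph hvU hNU] at this
  linarith

-- Such a pair cannot receive the new edge when `v` is split off: it would create a subgraph
-- of freedom number 2.
def BlockedPair (G : SimpleGraph V) (v a b : V) : Prop :=
  ∃ B : G.Subgraph, v ∉ B.verts ∧ a ∈ B.verts ∧ b ∈ B.verts ∧ subFreedom B = 3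

lemma Indep3.inf_edgeSet_eq_empty (hG : Indep3 G) {B₁ B₂ : G.Subgraph}
    (h₁ : subFreedom B₁ = 3) (h₂ : subFreedom B₂ = 3) (hsup : 4 ≤ subFreedom (B₁ ⊔ B₂)) :
    (B₁ ⊓ B₂).edgeSet = ∅ := by
  by_contra hE
  have := hG _ (Set.nonempty_iff_ne_empty.2 hE)
  linarith [subFreedom_sup_add_subFreedom_inf B₁ B₂]

lemma Indep3.not_blockedPair_all (hG : Indep3 G) (hv : (G.neighborSet v).ncard = 3)
    {x y z : V} (hN : G.neighborSet v = {x, y, z}) (hxz : x ≠ z) :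
    ¬ (BlockedPair G v x y ∧ BlockedPair G v y z ∧ BlockedPair G v x z) := by
  rintro ⟨⟨B₁, hv₁, hx₁, hy₁, hf₁⟩, ⟨B₂, hv₂, hy₂, hz₂, hf₂⟩, ⟨B₃, hv₃, hx₃, hz₃, hf₃⟩⟩
  have four_le {U : G.Subgraph} (hvU : v ∉ U.verts) (hx : x ∈ U.verts) (hy : y ∈ U.verts)
      (hz : z ∈ U.verts) : 4 ≤ subFreedom U := by
    have := hG.ncard_neighborSet_add_one_le_subFreedom (by simp [hN]) hvU
      (by simp [hN, Set.insert_subset_iff, hx, hy, hz])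
    rw [hv] at this
    exact_mod_cast this
  have h₁₂ := hG.inf_edgeSet_eq_empty hf₁ hf₂ (four_le (by simp [*]) (by simp [*])
    (by simp [*]) (by simp [*]))
  have h₁₃ := hG.inf_edgeSet_eq_empty hf₁ hf₃ (four_le (by simp [*]) (by simp [*])
    (by simp [*]) (by simp [*]))
  have h₂₃ := hG.inf_edgeSet_eq_empty hf₂ hf₃ (four_le (by simp [*]) (by simp [*])
    (by simp [*]) (by simp [*]))
  have hsup : subFreedom (B₁ ⊔ B₂) ≤ 4 := by
    have hy : 0 < (B₁ ⊓ B₂).verts.ncard := (Set.ncard_pos (Set.toFinite _)).2 ⟨y, hy₁, hy₂⟩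
    have := subFreedom_sup_add_subFreedom_inf B₁ B₂
    rw [subFreedom_of_edgeSet_eq_empty h₁₂] at this
    omega
  have hinf : 4 ≤ subFreedom ((B₁ ⊔ B₂) ⊓ B₃) := by
    have hE : ((B₁ ⊔ B₂) ⊓ B₃).edgeSet = ∅ := by
      rw [inf_sup_right, Subgraph.edgeSet_sup, h₁₃, h₂₃, Set.union_empty]
    have hxz' := Set.ncard_le_ncard (s := {x, z}) (t := ((B₁ ⊔ B₂) ⊓ B₃).verts)
      (Set.pair_subset ⟨Or.inl hx₁, hx₃⟩ ⟨Or.inr hz₂, hz₃⟩)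
    rw [Set.ncard_pair hxz] at hxz'
    rw [subFreedom_of_edgeSet_eq_empty hE]
    omega
  have := subFreedom_sup_add_subFreedom_inf (B₁ ⊔ B₂) B₃
  have := four_le (U := B₁ ⊔ B₂ ⊔ B₃) (by simp [*]) (by simp [*]) (by simp [*]) (by simp [*])
  omega

lemma Indep3.exists_not_blockedPair (hG : Indep3 G) (hv : (G.neighborSet v).ncard = 3) :
    ∃ x y z, G.neighborSet v = {x, y, z} ∧ x ≠ y ∧ x ≠ z ∧ y ≠ z ∧ ¬ BlockedPair G v x y := by
  obtain ⟨x, y, z, hxy, hxz, hyz, hN⟩ := Set.ncard_eq_three.1 hv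
  by_cases hbxy : BlockedPair G v x y
  · by_cases hbyz : BlockedPair G v y z
    · refine ⟨x, z, y, hN.trans (by rw [Set.pair_comm]), hxz, hxy, hyz.symm, fun hbxz => ?_⟩
      exact hG.not_blockedPair_all hv hN hxz ⟨hbxy, hbyz, hbxz⟩
    · exact ⟨y, z, x, hN.trans (by rw [Set.insert_comm, Set.pair_comm]), hyz, hxy.symm,
        hxz.symm, hbyz⟩
  · exact ⟨x, y, z, hN, hxy, hxz, hyz, hbxy⟩

end DegreeThree

section Reduction

variable {V W : Type}

lemma Indep3.of_embedding {G : SimpleGraph V} {K : SimpleGraph W} (hG : Indep3 G)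
    (f : K ↪g G) : Indep3 K := fun H hH =>
  subFreedom_map f H ▸ hG _ (by rw [Subgraph.edgeSet_map]; exact hH.image _)

variable {K : SimpleGraph W} {a b : W}

lemma edgeSet_comap_ofLE_sup_edge (hnadj : ¬ K.Adj a b) (H : (K ⊔ edge a b).Subgraph) :
    (H.comap (Hom.ofLE le_sup_left)).edgeSet = H.edgeSet \ {s(a, b)} := by
  ext e
  induction e using Sym2.ind with
  | _ p q =>
    have hK : K.Adj p q → s(p, q) ≠ s(a, b) := by
      rintro h heq
      rcases Sym2.eq_iff.1 heq with ⟨rfl, rfl⟩ | ⟨rfl, rfl⟩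
      exacts [hnadj h, hnadj h.symm]
    have hsup : (K ⊔ edge a b).Adj p q → s(p, q) ≠ s(a, b) → K.Adj p q := by
      rintro (h | h) hne
      · exact h
      · exact absurd (Sym2.eq_iff.2 ((edge_adj _ _ _ _).1 h).1) hne
    simp only [Subgraph.mem_edgeSet, Subgraph.comap_adj, Hom.coe_ofLE, id, Set.mem_sdiff,
      Set.mem_singleton_iff]
    exact ⟨fun h => ⟨h.2, hK h.1⟩, fun h => ⟨hsup (H.adj_sub h.1) h.2, h.1⟩⟩

variable [Finite W]

lemma Indep3.sup_edge (hK : Indep3 K) (hab : a ≠ b)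
    (hfree : ∀ H : K.Subgraph, a ∈ H.verts → b ∈ H.verts → subFreedom H ≠ 3) :
    Indep3 (K ⊔ edge a b) := by
  have hnadj : ¬ K.Adj a b := fun h => hfree _ (by simp) (by simp) (subFreedom_subgraphOfAdj h)
  intro H hH
  set H₀ := H.comap (Hom.ofLE le_sup_left)
  have hE := edgeSet_comap_ofLE_sup_edge hnadj H
  have hV : H₀.verts = H.verts := rfl
  by_cases hab' : s(a, b) ∈ H.edgeSet
  · have hcard := Set.ncard_sdiff_singleton_add_one hab' H.edgeSet.toFinite
    have ha : a ∈ H₀.verts := H.edge_vert hab'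
    have hb : b ∈ H₀.verts := H.edge_vert (H.adj_symm hab')
    have h3 := hK.three_le_subFreedom hab ha hb
    have hne := hfree H₀ ha hb
    rw [subFreedom, hE, hV] at h3 hne
    rw [subFreedom, ← hcard]
    push_cast
    omega
  · rw [Set.sdiff_singleton_eq_self hab'] at hE
    have := hK H₀ (hE ▸ hH)
    rwa [subFreedom, hE, hV] at this

lemma gFreedom_sup_edge (hnadj : ¬ K.Adj a b) (hab : a ≠ b) :
    gFreedom (K ⊔ edge a b) = gFreedom K - 1 := by
  rw [gFreedom, gFreedom, edgeSet_sup, edgeSet_edge_of_ne hab, Set.union_singleton,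
    Set.ncard_insert_of_notMem (show s(a, b) ∉ K.edgeSet from hnadj)]
  push_cast
  ring

end Reduction

section VertexDeletion

variable {V : Type} {G : SimpleGraph V} {v : V}

lemma map_top_sup_incidenceSubgraph :
    (⊤ : (G.comap (Function.Embedding.subtype (· ≠ v))).Subgraph).map
      (Embedding.comap (Function.Embedding.subtype (· ≠ v)) G).toHom ⊔ G.incidenceSubgraph v =
      ⊤ := by
  ext p q
  · refine ⟨fun _ => trivial, fun _ => ?_⟩
    by_cases hp : p = v
    · subst hp
      exact Or.inr (Set.mem_insert _ _)
    · exact Or.inl ⟨⟨p, hp⟩, trivial, rfl⟩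
  · simp only [incidenceSubgraph, Subgraph.sup_adj, Subgraph.map_adj, Subgraph.top_adj,
      Relation.Map, Subtype.exists]
    refine ⟨?_, fun h => ?_⟩
    · rintro (⟨a, ha, b, hb, h, rfl, rfl⟩ | ⟨h, -⟩)
      exacts [h, h]
    · by_cases hpq : p = v ∨ q = v
      · exact Or.inr ⟨h, hpq⟩
      · rw [not_or] at hpq
        exact Or.inl ⟨p, hpq.1, q, hpq.2, h, rfl, rfl⟩

variable [Finite V]

lemma gFreedom_comap_subtype_ne :
    gFreedom (G.comap (Function.Embedding.subtype (· ≠ v))) =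
      gFreedom G + (G.neighborSet v).ncard - 2 := by
  set U := (⊤ : (G.comap (Function.Embedding.subtype (· ≠ v))).Subgraph).map
    (Embedding.comap (Function.Embedding.subtype (· ≠ v)) G).toHom
  have hvU : v ∉ U.verts := fun ⟨w, _, hw⟩ => w.2 hw
  have hNU : G.neighborSet v ⊆ U.verts := fun w hw => ⟨⟨w, hw.ne'⟩, trivial, rfl⟩
  have := subFreedom_sup_incidenceSubgraph hvU hNU
  rw [map_top_sup_incidenceSubgraph, subFreedom_map, ← gFreedom_eq_subFreedom_top,
    ← gFreedom_eq_subFreedom_top] at this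
  linarith

end VertexDeletion

lemma henneberg2Rel_comap_sup_edge {V : Type} {G : SimpleGraph V} {v x y z : V}
    (hN : G.neighborSet v = {x, y, z}) (hxy : x ≠ y) (hxz : x ≠ z) (hyz : y ≠ z)
    (hnadj : ¬ G.Adj x y) (hx : x ≠ v) (hy : y ≠ v) (hz : z ≠ v) :
    Henneberg2Rel (G.comap (Function.Embedding.subtype (· ≠ v)) ⊔ edge ⟨x, hx⟩ ⟨y, hy⟩) G
      (Function.Embedding.subtype (· ≠ v)) v := by
  have hv (q : V) : G.Adj v q ↔ q = x ∨ q = y ∨ q = z := by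
    rw [← mem_neighborSet, hN]
    rfl
  refine ⟨fun p => or_iff_not_imp_right.2 fun hp => ⟨⟨p, hp⟩, rfl⟩, fun ⟨p, hp⟩ => p.2 hp,
    ⟨x, hx⟩, ⟨y, hy⟩, ⟨z, hz⟩, Or.inr ((edge_adj _ _ _ _).2 ⟨Or.inl ⟨rfl, rfl⟩, ?_⟩),
    fun h => hxz (congrArg Subtype.val h).symm, fun h => hyz (congrArg Subtype.val h).symm,
    fun p q => ?_⟩
  · exact fun h => hxy (congrArg Subtype.val h)
  constructor
  · intro h
    by_cases hp : p = v
    · subst hp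
      exact Or.inr (Or.inl ⟨rfl, (hv q).1 h⟩)
    by_cases hq : q = v
    · subst hq
      exact Or.inr (Or.inr ⟨rfl, (hv p).1 h.symm⟩)
    refine Or.inl ⟨⟨p, hp⟩, ⟨q, hq⟩, Or.inl h, fun he => hnadj ?_, rfl, rfl⟩
    rcases Sym2.eq_iff.1 he with ⟨hpx, hqy⟩ | ⟨hpy, hqx⟩
    · rwa [← Subtype.mk.inj hpx, ← Subtype.mk.inj hqy]
    · rw [← Subtype.mk.inj hpy, ← Subtype.mk.inj hqx]
      exact h.symm
  · rintro (⟨a, b, hab | hab, hne, rfl, rfl⟩ | ⟨rfl, hq⟩ | ⟨rfl, hp⟩)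
    · exact hab
    · exact absurd (Sym2.eq_iff.2 ((edge_adj _ _ _ _).1 hab).1) hne
    · exact (hv q).2 hq
    · exact ((hv p).2 hp).symm

/-- If `G` is maximally independent of type 3 and has a vertex `v`
of degree 3 then `G` is obtained from some maximally independent graph `G'` of
type 3 by a Henneberg 2 move with new vertex `v`. -/
theorem reverse_henneberg2_maxIndep3 {V : Type} [Fintype V] (G : SimpleGraph V)
    (hG : MaxIndep3 G) (v : V) (hv : (G.neighborSet v).ncard = 3) :
    ∃ G' : SimpleGraph {u : V // u ≠ v}, MaxIndep3 G' ∧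
      Henneberg2Rel G' G (Function.Embedding.subtype (· ≠ v)) v := by
  obtain ⟨x, y, z, hN, hxy, hxz, hyz, hfree⟩ := hG.1.exists_not_blockedPair hv
  have hne (w : V) (hw : w ∈ G.neighborSet v) : w ≠ v := hw.ne'
  have hx := hne x (by simp [hN])
  have hy := hne y (by simp [hN])
  have hz := hne z (by simp [hN])
  let φ := Embedding.comap (Function.Embedding.subtype (· ≠ v)) G
  have hfree' (H : (G.comap (Function.Embedding.subtype (· ≠ v))).Subgraph)
      (hxH : ⟨x, hx⟩ ∈ H.verts) (hyH : ⟨y, hy⟩ ∈ H.verts) : subFreedom H ≠ 3 := fun hH =>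
    hfree ⟨H.map φ.toHom, fun ⟨w, _, hw⟩ => w.2 hw, ⟨_, hxH, rfl⟩, ⟨_, hyH, rfl⟩,
      (subFreedom_map φ H).trans hH⟩
  have hnadj : ¬ (G.comap (Function.Embedding.subtype (· ≠ v))).Adj ⟨x, hx⟩ ⟨y, hy⟩ := fun h =>
    hfree' _ (Set.mem_insert _ _) (Set.mem_insert_of_mem _ rfl) (subFreedom_subgraphOfAdj h)
  have hxy' : (⟨x, hx⟩ : {u // u ≠ v}) ≠ ⟨y, hy⟩ := fun h => hxy (congrArg Subtype.val h)
  refine ⟨_, ⟨(hG.1.of_embedding φ).sup_edge hxy' hfree', ?_⟩,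
    henneberg2Rel_comap_sup_edge hN hxy hxz hyz hnadj hx hy hz⟩
  rw [gFreedom_sup_edge hnadj hxy', gFreedom_comap_subtype_ne, hG.2, hv]
  norm_num
end
end

section
/- Let G be a maximally independent graph of type 2. Then at least one of the following holds: (i) G has a vertex of degree 2; (ii) every vertex of G of degree 3 lies in a subgraph of G isomorphic to the complete graph K₄; (iii) there exist a maximally independent graph G' of type 2 and a Henneberg 2 move G' → G. -/
/-!
Call a subgraph tight when its freedom number is at most `2`. Freedom numbers of subgraphs are
modular, `f(A ⊔ B) + f(A ⊓ B) = f(A) + f(B)`, so in a graph independent of type 2 two tight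
subgraphs that share a vertex have a tight union. Let `v` be a vertex of degree 3 in no `K₄`.
If every non-adjacent pair of neighbours of `v` lay in a tight subgraph avoiding `v`, gluing
these (and adding the edges among the neighbours) would give a tight subgraph avoiding `v` and
containing all three neighbours; adding `v` with its three edges would lower the freedom number
to `1`. Hence some non-adjacent neighbours `x`, `y` of `v` lie in no tight subgraph avoiding `v`,
which is exactly what makes `G - v + xy` independent of type 2; it has the same freedom number
as `G`, and `G` is obtained from it by the Henneberg 2 move breaking `xy` at `v`.
-/

open SimpleGraph

noncomputable section

lemma Set.exists_eq_triple_of_ncard_eq_three {α : Type*} {s : Set α} (hs : s.ncard = 3)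
    {x y : α} (hx : x ∈ s) (hy : y ∈ s) (hxy : x ≠ y) :
    ∃ z, z ≠ x ∧ z ≠ y ∧ s = {x, y, z} := by
  have hxys : {x, y} ⊆ s := Set.insert_subset hx (Set.singleton_subset_iff.2 hy)
  have hfin : s.Finite := Set.finite_of_ncard_pos (by omega)
  obtain ⟨z, hz⟩ := Set.ncard_eq_one.1 <| by
    rw [Set.ncard_sdiff hxys (hfin.subset hxys), hs, Set.ncard_pair hxy]
  have hzs : z ∈ s \ {x, y} := hz ▸ rfl
  refine ⟨z, fun h => hzs.2 (by simp [h]), fun h => hzs.2 (by simp [h]), ?_⟩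
  rw [← Set.union_sdiff_cancel hxys, hz]
  ext; simp; tauto

namespace SimpleGraph

variable {V : Type} {G : SimpleGraph V}

def Subgraph.insertVertex (H : G.Subgraph) (w : V) (N : Set V) (hNw : N ⊆ G.neighborSet w)
    (hNH : N ⊆ H.verts) : G.Subgraph where
  verts := insert w H.verts
  Adj a b := H.Adj a b ∨ (a = w ∧ b ∈ N) ∨ (b = w ∧ a ∈ N)
  adj_sub := by
    rintro a b (h | ⟨rfl, hb⟩ | ⟨rfl, ha⟩)
    exacts [H.adj_sub h, hNw hb, (hNw ha).symm]
  edge_vert := by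
    rintro a b (h | ⟨rfl, -⟩ | ⟨-, ha⟩)
    exacts [Or.inr (H.edge_vert h), Or.inl rfl, Or.inr (hNH ha)]
  symm := ⟨fun a b h => by
    rcases h with h | h | h
    exacts [Or.inl h.symm, Or.inr (Or.inr h), Or.inr (Or.inl h)]⟩

variable (G) in
def InTight (U S : Set V) : Prop :=
  ∃ H : G.Subgraph, H.verts ⊆ U ∧ S ⊆ H.verts ∧ subFreedom H ≤ 2

section Finite

variable [Finite V]

lemma subFreedom_sup_add_inf (A B : G.Subgraph) :
    subFreedom (A ⊔ B) + subFreedom (A ⊓ B) = subFreedom A + subFreedom B := by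
  have hv := Set.ncard_union_add_ncard_inter A.verts B.verts
  have he := Set.ncard_union_add_ncard_inter A.edgeSet B.edgeSet
  simp only [subFreedom, Subgraph.verts_sup, Subgraph.verts_inf, Subgraph.edgeSet_sup,
    Subgraph.edgeSet_inf]
  omega

lemma subFreedom_insertVertex (H : G.Subgraph) {w : V} {N : Set V}
    (hNw : N ⊆ G.neighborSet w) (hNH : N ⊆ H.verts) (hw : w ∉ H.verts) :
    subFreedom (H.insertVertex w N hNw hNH) = subFreedom H + 2 - N.ncard := by
  have hedges :
      (H.insertVertex w N hNw hNH).edgeSet = H.edgeSet ∪ (fun u => s(w, u)) '' N := by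
    ext e
    induction e using Sym2.ind with
    | _ a b =>
      simp only [Subgraph.mem_edgeSet, Set.mem_union, Set.mem_image, Sym2.eq_iff]
      show _ ∨ _ ∨ _ ↔ _
      grind
  have hdisj : Disjoint H.edgeSet ((fun u => s(w, u)) '' N) := by
    rw [Set.disjoint_right]
    rintro _ ⟨u, -, rfl⟩ h
    exact hw (H.edge_vert h)
  have hinj : Function.Injective fun u => s(w, u) := fun _ _ => Sym2.congr_right.1
  simp only [subFreedom, hedges]
  rw [Set.ncard_union_eq hdisj, Set.ncard_image_of_injective _ hinj]
  simp only [Subgraph.insertVertex, Set.ncard_insert_of_notMem hw]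
  push_cast
  ring

lemma Indep2.subFreedom_sup_le_two (hG : Indep2 G) {A B : G.Subgraph}
    (hA : subFreedom A ≤ 2) (hB : subFreedom B ≤ 2) (hAB : (A.verts ∩ B.verts).Nonempty) :
    subFreedom (A ⊔ B) ≤ 2 := by
  have := hG (A ⊓ B) hAB
  have := subFreedom_sup_add_inf A B
  omega

lemma Indep2.ncard_neighborSet_le_subFreedom (hG : Indep2 G) {K : G.Subgraph} {v : V}
    (hv : v ∉ K.verts) (hN : G.neighborSet v ⊆ K.verts) :
    ((G.neighborSet v).ncard : ℤ) ≤ subFreedom K := by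
  have := hG (K.insertVertex v _ subset_rfl hN) ⟨v, Set.mem_insert v _⟩
  rw [subFreedom_insertVertex K subset_rfl hN hv] at this
  omega

lemma InTight.union (hG : Indep2 G) {U S T : Set V} (hS : G.InTight U S)
    (hT : G.InTight U T) (hST : (S ∩ T).Nonempty) : G.InTight U (S ∪ T) := by
  obtain ⟨A, hAU, hSA, hA⟩ := hS
  obtain ⟨B, hBU, hTB, hB⟩ := hT
  exact ⟨A ⊔ B, Set.union_subset hAU hBU, Set.union_subset_union hSA hTB,
    hG.subFreedom_sup_le_two hA hB (hST.mono (Set.inter_subset_inter hSA hTB))⟩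

lemma InTight.insert_of_adj {U S : Set V} {a b c : V} (h : G.InTight U S) (ha : a ∈ S)
    (hb : b ∈ S) (hab : a ≠ b) (hac : G.Adj a c) (hbc : G.Adj b c) (hc : c ∈ U) :
    G.InTight U (insert c S) := by
  obtain ⟨H, hHU, hSH, hH⟩ := h
  by_cases hcH : c ∈ H.verts
  · exact ⟨H, hHU, Set.insert_subset hcH hSH, hH⟩
  have hNc : {a, b} ⊆ G.neighborSet c := by
    simp [Set.insert_subset_iff, hac.symm, hbc.symm]
  have hNH : {a, b} ⊆ H.verts := Set.insert_subset (hSH ha) (by simpa using hSH hb)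
  refine ⟨H.insertVertex c {a, b} hNc hNH, Set.insert_subset hc hHU,
    Set.insert_subset_insert hSH, ?_⟩
  rw [subFreedom_insertVertex H hNc hNH hcH, Set.ncard_pair hab]
  omega

lemma Indep2.inTight_triple (hG : Indep2 G) {U : Set V} {x y z : V} (hxy : x ≠ y)
    (hz : z ∈ U) (hxy' : G.InTight U {x, y}) (hxz : ¬ G.Adj x z → G.InTight U {x, z})
    (hyz : ¬ G.Adj y z → G.InTight U {y, z}) : G.InTight U {x, y, z} := by
  by_cases hxz' : G.Adj x z
  · by_cases hyz' : G.Adj y z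
    · convert hxy'.insert_of_adj (by simp) (by simp) hxy hxz' hyz' hz using 1
      ext; simp; tauto
    · convert hxy'.union hG (hyz hyz') ⟨y, by simp⟩ using 1
      ext; simp; tauto
  · convert hxy'.union hG (hxz hxz') ⟨x, by simp⟩ using 1
    ext; simp; tauto

lemma Indep2.exists_not_adj_not_inTight (hG : Indep2 G) {v : V}
    (hdeg : (G.neighborSet v).ncard = 3) (hcl : ¬ G.IsClique (G.neighborSet v)) :
    ∃ x ∈ G.neighborSet v, ∃ y ∈ G.neighborSet v,
      x ≠ y ∧ ¬ G.Adj x y ∧ ¬ G.InTight {v}ᶜ {x, y} := by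
  by_contra! hall
  obtain ⟨x, hx, y, hy, hxy, hnxy⟩ : ∃ x ∈ G.neighborSet v, ∃ y ∈ G.neighborSet v,
      x ≠ y ∧ ¬ G.Adj x y := by
    simpa [IsClique, Set.Pairwise] using hcl
  obtain ⟨z, hzx, hzy, hN⟩ := Set.exists_eq_triple_of_ncard_eq_three hdeg hx hy hxy
  have hz : z ∈ G.neighborSet v := by simp [hN]
  obtain ⟨K, hKU, hNK, hK⟩ := hG.inTight_triple hxy (G.ne_of_adj hz).symm
    (hall x hx y hy hxy hnxy) (hall x hx z hz hzx.symm) (hall y hy z hz hzy.symm)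
  have := hG.ncard_neighborSet_le_subFreedom (fun hv => hKU hv rfl) (hN ▸ hNK)
  omega

end Finite

def deleteVertexAddEdge (G : SimpleGraph V) (v x y : V) : SimpleGraph {u // u ≠ v} :=
  (G ⊔ edge x y).comap (Function.Embedding.subtype (· ≠ v))

lemma deleteVertexAddEdge_adj {v x y : V} {a b : {u // u ≠ v}} :
    (G.deleteVertexAddEdge v x y).Adj a b ↔ G.Adj a b ∨ s(x, y) = s(a.1, b.1) ∧ a ≠ b := by
  simp [deleteVertexAddEdge, adj_edge, Subtype.ext_iff]

lemma deleteVertexAddEdge_adj_and_not_eq_iff {v x y : V} (hnxy : ¬ G.Adj x y) (hx : x ≠ v)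
    (hy : y ≠ v) {a b : {u // u ≠ v}} :
    ((G.deleteVertexAddEdge v x y).Adj a b ∧ ¬ s(a, b) = s(⟨x, hx⟩, ⟨y, hy⟩)) ↔
      G.Adj a b := by
  have hval : s(a, b) = s(⟨x, hx⟩, ⟨y, hy⟩) ↔ s(x, y) = s(a.1, b.1) := by
    simp only [Sym2.eq_iff, Subtype.ext_iff]
    tauto
  rw [deleteVertexAddEdge_adj, hval]
  constructor
  · rintro ⟨h | ⟨h, -⟩, hne⟩
    exacts [h, absurd h hne]
  · exact fun h => ⟨Or.inl h, fun he => hnxy ((G.adj_congr_of_sym2 he).2 h)⟩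

lemma map_comap_subtype_ne (H : SimpleGraph V) (v : V) :
    (H.comap (Function.Embedding.subtype (· ≠ v))).map (Function.Embedding.subtype (· ≠ v)) =
      H.deleteIncidenceSet v := by
  ext a b
  rw [map_adj]
  simp only [comap_adj, Function.Embedding.coe_subtype, deleteIncidenceSet_adj, Subtype.exists]
  grind

lemma henneberg2Rel_deleteVertexAddEdge {v x y z : V} (hN : G.neighborSet v = {x, y, z})
    (hxy : x ≠ y) (hzx : z ≠ x) (hzy : z ≠ y) (hnxy : ¬ G.Adj x y) :
    Henneberg2Rel (G.deleteVertexAddEdge v x y) G (Function.Embedding.subtype (· ≠ v)) v := by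
  have hv : ∀ t, G.Adj v t ↔ t = x ∨ t = y ∨ t = z := fun t => by
    rw [← mem_neighborSet, hN]; simp
  have hx : x ≠ v := ((hv x).2 (by simp)).ne'
  have hy : y ≠ v := ((hv y).2 (by simp)).ne'
  have hz : z ≠ v := ((hv z).2 (by simp)).ne'
  refine ⟨fun u => ?_, ?_, ⟨x, hx⟩, ⟨y, hy⟩, ⟨z, hz⟩, ?_, ?_, ?_, fun s t => ?_⟩
  · by_cases h : u = v
    exacts [Or.inr h, Or.inl ⟨⟨u, h⟩, rfl⟩]
  · rintro ⟨a, ha⟩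
    exact a.2 ha
  · exact deleteVertexAddEdge_adj.2 (Or.inr ⟨rfl, by simpa [Subtype.ext_iff]⟩)
  · simpa [Subtype.ext_iff]
  · simpa [Subtype.ext_iff]
  simp only [Function.Embedding.coe_subtype, ← and_assoc,
    deleteVertexAddEdge_adj_and_not_eq_iff hnxy hx hy]
  by_cases hs : s = v
  · subst hs
    simp only [hv]
    grind
  by_cases ht : t = v
  · subst ht
    rw [G.adj_comm, hv]
    grind
  refine ⟨fun h => Or.inl ⟨⟨s, hs⟩, ⟨t, ht⟩, ⟨h, rfl⟩, rfl⟩, ?_⟩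
  rintro (⟨a, b, ⟨h, rfl⟩, rfl⟩ | ⟨h, -⟩ | ⟨h, -⟩)
  exacts [h, absurd h hs, absurd h ht]

def Subgraph.imageIn {W : Type} {G' : SimpleGraph W} (H' : G'.Subgraph) (G : SimpleGraph V)
    (φ : W → V) : G.Subgraph where
  verts := φ '' H'.verts
  Adj a b := G.Adj a b ∧ ∃ a' b', H'.Adj a' b' ∧ φ a' = a ∧ φ b' = b
  adj_sub h := h.1
  edge_vert := by
    rintro _ _ ⟨-, a', b', h, rfl, rfl⟩
    exact ⟨a', H'.edge_vert h, rfl⟩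
  symm := ⟨by
    rintro _ _ ⟨h, a', b', h', rfl, rfl⟩
    exact ⟨h.symm, b', a', h'.symm, rfl, rfl⟩⟩

lemma Subgraph.image_edgeSet_subset_insert_imageIn {W : Type} {G' : SimpleGraph W}
    (H' : G'.Subgraph) {φ : W → V} {e : Sym2 V}
    (hG' : ∀ a b, G'.Adj a b → G.Adj (φ a) (φ b) ∨ s(φ a, φ b) = e) :
    Sym2.map φ '' H'.edgeSet ⊆ insert e (H'.imageIn G φ).edgeSet := by
  rintro _ ⟨e', he', rfl⟩
  induction e' using Sym2.ind with
  | _ a b =>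
    rcases hG' a b (H'.adj_sub he') with h | h
    · exact Or.inr ⟨h, a, b, he', rfl, rfl⟩
    · exact Or.inl h

section Finite

variable [Finite V]

lemma ncard_univ_subtype_ne_add_one (v : V) :
    (Set.univ : Set {u // u ≠ v}).ncard + 1 = (Set.univ : Set V).ncard := by
  have := Fintype.ofFinite V
  classical
  have := Fintype.card_pos_iff.2 ⟨v⟩
  simp only [Set.ncard_univ, Nat.card_eq_fintype_card, ne_eq, Fintype.card_subtype_compl,
    Fintype.card_unique]
  omega

lemma ncard_edgeSet_comap_subtype_ne_add (H : SimpleGraph V) (v : V) :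
    (H.comap (Function.Embedding.subtype (· ≠ v))).edgeSet.ncard + (H.neighborSet v).ncard =
      H.edgeSet.ncard := by
  classical
  have hinc : (H.incidenceSet v).ncard = (H.neighborSet v).ncard :=
    Nat.card_congr (H.incidenceSetEquivNeighborSet v)
  rw [← Set.ncard_image_of_injective _ (Function.Embedding.subtype (· ≠ v)).sym2Map.injective,
    ← edgeSet_map, map_comap_subtype_ne, edgeSet_deleteIncidenceSet,
    Set.ncard_sdiff (H.incidenceSet_subset v), hinc]
  have := Set.ncard_le_ncard (H.incidenceSet_subset v)
  omega

lemma gFreedom_deleteVertexAddEdge {v x y : V} (hx : x ≠ v) (hy : y ≠ v)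
    (hxy : x ≠ y) (hnxy : ¬ G.Adj x y) (hdeg : (G.neighborSet v).ncard = 3)
    (hG : gFreedom G = 2) : gFreedom (G.deleteVertexAddEdge v x y) = 2 := by
  have hN : (G ⊔ edge x y).neighborSet v = G.neighborSet v := by
    ext u
    simp only [mem_neighborSet, sup_adj, adj_edge, or_iff_left_iff_imp, and_imp]
    intro h _
    rcases Sym2.eq_iff.1 h with ⟨h, -⟩ | ⟨-, h⟩
    exacts [(hx h).elim, (hy h).elim]
  have hE : (G ⊔ edge x y).edgeSet.ncard = G.edgeSet.ncard + 1 := by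
    rw [edgeSet_sup, edgeSet_edge_of_ne hxy, Set.union_singleton,
      Set.ncard_insert_of_notMem (by simpa using hnxy)]
  have hdel := ncard_edgeSet_comap_subtype_ne_add (G ⊔ edge x y) v
  rw [hN, hdeg, hE] at hdel
  have := ncard_univ_subtype_ne_add_one v
  unfold gFreedom deleteVertexAddEdge at *
  omega

/-- A subgraph of `G - v + xy` through the new edge comes from a subgraph of `G` through `x`
and `y` avoiding `v` with one edge fewer; the hypothesis makes the freedom number of the latter
at least `3`. -/
lemma Indep2.deleteVertexAddEdge (hG : Indep2 G) {v x y : V}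
    (hxy : ¬ G.InTight {v}ᶜ {x, y}) : Indep2 (G.deleteVertexAddEdge v x y) := by
  intro H' hne
  set H := H'.imageIn G Subtype.val
  have hV : H.verts.ncard = H'.verts.ncard :=
    Set.ncard_image_of_injective _ Subtype.val_injective
  have hE : (Sym2.map Subtype.val '' H'.edgeSet).ncard = H'.edgeSet.ncard :=
    Set.ncard_image_of_injective _ (Sym2.map.injective Subtype.val_injective)
  have hsub : Sym2.map Subtype.val '' H'.edgeSet ⊆ insert s(x, y) H.edgeSet :=
    H'.image_edgeSet_subset_insert_imageIn fun a b h => by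
      rcases deleteVertexAddEdge_adj.1 h with h | ⟨h, -⟩
      exacts [Or.inl h, Or.inr h.symm]
  by_cases hxyE : s(x, y) ∈ Sym2.map Subtype.val '' H'.edgeSet
  · have hxyH : {x, y} ⊆ H.verts := by
      obtain ⟨e, he, hexy⟩ := hxyE
      intro u hu
      obtain ⟨u', hu', rfl⟩ := Sym2.mem_map.1 (hexy ▸ (by simpa using hu : u ∈ s(x, y)))
      exact ⟨u', H'.mem_verts_of_mem_edge he hu', rfl⟩
    have hHU : H.verts ⊆ {v}ᶜ := by
      rintro _ ⟨a, -, rfl⟩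
      exact a.2
    have h3 : 3 ≤ subFreedom H := by
      by_contra h
      exact hxy ⟨H, hHU, hxyH, by omega⟩
    have := (Set.ncard_le_ncard hsub).trans (Set.ncard_insert_le _ _)
    unfold subFreedom at *
    omega
  · have hsub' : Sym2.map Subtype.val '' H'.edgeSet ⊆ H.edgeSet := fun e he =>
      (hsub he).resolve_left (by rintro rfl; exact hxyE he)
    have h2 := hG H (hne.image _)
    have := Set.ncard_le_ncard hsub'
    unfold subFreedom at *
    omega

end Finite

end SimpleGraph

/-- If `G` is maximally independent of type 2 then either `G` has
a vertex of degree 2, or every degree 3 vertex of `G` lies in a `K₄` subgraph, or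
`G` is obtained from some maximally independent graph of type 2 by a Henneberg 2
move. -/
theorem maxIndep2_trichotomy {V : Type} [Fintype V] (G : SimpleGraph V)
    (hG : MaxIndep2 G) :
    (∃ v : V, (G.neighborSet v).ncard = 2) ∨
    (∀ v : V, (G.neighborSet v).ncard = 3 →
      ∃ s : Set V, v ∈ s ∧ s.ncard = 4 ∧
        ∀ x ∈ s, ∀ y ∈ s, x ≠ y → G.Adj x y) ∨
    (∃ (w : V) (G' : SimpleGraph {u : V // u ≠ w}), MaxIndep2 G' ∧
      Henneberg2Rel G' G (Function.Embedding.subtype (· ≠ w)) w) := by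
  by_cases hK4 : ∀ v : V, (G.neighborSet v).ncard = 3 →
      ∃ s : Set V, v ∈ s ∧ s.ncard = 4 ∧ G.IsClique s
  · exact Or.inr (Or.inl hK4)
  push Not at hK4
  obtain ⟨v, hdeg, hnoK4⟩ := hK4
  have hcl : ¬ G.IsClique (G.neighborSet v) := fun h =>
    hnoK4 _ (Set.mem_insert v _)
      (by rw [Set.ncard_insert_of_notMem G.notMem_neighborSet_self, hdeg])
      (isClique_insert.2 ⟨h, fun _ hb _ => hb⟩)
  obtain ⟨x, hx, y, hy, hxy, hnxy, hfree⟩ := hG.1.exists_not_adj_not_inTight hdeg hcl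
  obtain ⟨z, hzx, hzy, hN⟩ := Set.exists_eq_triple_of_ncard_eq_three hdeg hx hy hxy
  refine Or.inr (Or.inr ⟨v, G.deleteVertexAddEdge v x y, ⟨hG.1.deleteVertexAddEdge hfree, ?_⟩,
    henneberg2Rel_deleteVertexAddEdge hN hxy hzx hzy hnxy⟩)
  exact gFreedom_deleteVertexAddEdge (G.ne_of_adj hx).symm (G.ne_of_adj hy).symm hxy hnxy hdeg
    hG.2
end
end

section
/- Let G be a graph that is independent of type 2 and let H be a proper subgraph of G with f(H) = 2. (a) If the contraction G/H is a simple graph (no loops or parallel edges arise), then G/H is independent of type 2. (b) If, in addition, H is maximal with respect to inclusion among subgraphs of G with freedom number equal to 2, then H is a vertex-induced subgraph of G and G/H is a simple graph. -/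
open SimpleGraph

noncomputable section

/-- The contraction `G/H` of the subgraph `H` of `G` to a single new vertex
(`none` plays the role of `v*`): vertices are the vertices of `G` outside `H`
together with `v*`; two old vertices are adjacent iff they are adjacent in `G`,
and an old vertex is adjacent to `v*` iff it is adjacent in `G` to some vertex
of `H`. -/
def contractGraph {V : Type} (G : SimpleGraph V) (H : G.Subgraph) :
    SimpleGraph (Option {v : V // v ∉ H.verts}) where
  Adj x y :=
    match x, y with
    | some a, some b => G.Adj a.val b.val
    | some a, none => ∃ w ∈ H.verts, G.Adj a.val w
    | none, some b => ∃ w ∈ H.verts, G.Adj b.val w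
    | none, none => False
  symm := by
    constructor
    rintro (_ | a) (_ | b) h
    · exact h.elim
    · exact h
    · exact h
    · exact h.symm
  loopless := by
    constructor
    rintro (_ | a) h
    · exact h
    · exact G.loopless.irrefl _ h

/-- The contraction `G/H` produces a simple graph: no loops arise (every edge of
`G` inside `V(H)` is an edge of `H`) and no parallel edges arise (no vertex
outside `H` has two distinct neighbours in `H`). -/
def ContractionIsSimple {V : Type} (G : SimpleGraph V) (H : G.Subgraph) : Prop :=
  (∀ a b : V, a ∈ H.verts → b ∈ H.verts → G.Adj a b → H.Adj a b) ∧
  (∀ x : V, x ∉ H.verts → ∀ w₁ w₂ : V, w₁ ∈ H.verts → w₂ ∈ H.verts →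
    G.Adj x w₁ → G.Adj x w₂ → w₁ = w₂)

/-!
(a) A subgraph `K` of `G/H` lifts to a subgraph of `G`: keep the old vertices and edges of `K`,
replace each edge `x v*` of `K` by an edge from `x` to a neighbour of `x` in `H`, and add all of
`H` when `v* ∈ K`. Trading `v*` for `H` changes the freedom number by `f(H) - 2 = 0`, so the lift
has the same freedom number as `K`, which is therefore at least `2`.

(b) Adding to `H` an edge of `G` between two of its vertices would give a subgraph with
freedom number `1`; joining a vertex outside `H` to two distinct vertices of `H` gives a larger
subgraph with freedom number `2`, contradicting maximality.
-/

open Classical in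
lemma Set.ncard_eq_ncard_preimage_some_add {α : Type*} [Finite α] (s : Set (Option α)) :
    s.ncard = (some ⁻¹' s).ncard + if none ∈ s then 1 else 0 := by
  have hsome : (some '' (some ⁻¹' s)).ncard = (some ⁻¹' s).ncard :=
    Set.ncard_image_of_injective _ (Option.some_injective α)
  by_cases hnone : none ∈ s
  · have hs : s = insert none (some '' (some ⁻¹' s)) := by
      ext (_ | a) <;> simp [hnone]
    rw [if_pos hnone, ← hsome]
    conv_lhs => rw [hs]
    exact Set.ncard_insert_of_notMem (by simp)
  · have hs : s = some '' (some ⁻¹' s) := by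
      ext (_ | a) <;> simp [hnone]
    rw [if_neg hnone, ← hsome, ← hs, add_zero]

section Contraction

variable {V : Type} {G : SimpleGraph V} {H : G.Subgraph}

lemma verts_nonempty_of_subFreedom_ne_zero (hf : subFreedom H ≠ 0) : H.verts.Nonempty := by
  rw [Set.nonempty_iff_ne_empty]
  intro hV
  have hE : H.edgeSet = ∅ := by
    rw [← Subgraph.edgeSet_bot, (Subgraph.eq_bot_iff_verts_eq_empty H).2 hV]
  simp [subFreedom, hV, hE] at hf

lemma exists_eq_mk_some_of_mem_edgeSet_contractGraph {e : Sym2 (Option {v : V // v ∉ H.verts})}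
    (he : e ∈ (contractGraph G H).edgeSet) :
    ∃ a y, (contractGraph G H).Adj (some a) y ∧ e = s(some a, y) := by
  induction e using Sym2.ind with
  | _ x y =>
    rcases x with _ | a
    · rcases y with _ | b
      · exact he.elim
      · exact ⟨b, none, (contractGraph G H).adj_symm he, Sym2.eq_swap⟩
    · exact ⟨a, y, he, rfl⟩

open Classical in
/-- Junk value `a` when `a` has no neighbour in `H`. -/
def neighborIn (H : G.Subgraph) (a : V) : V :=
  if h : ∃ w ∈ H.verts, G.Adj a w then h.choose else a

lemma neighborIn_spec {a : V} (h : ∃ w ∈ H.verts, G.Adj a w) :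
    neighborIn H a ∈ H.verts ∧ G.Adj a (neighborIn H a) := by
  rw [neighborIn, dif_pos h]
  exact h.choose_spec

def liftVert (H : G.Subgraph) (a : V) : Option {v : V // v ∉ H.verts} → V
  | some b => b
  | none => neighborIn H a

def contractVert (H : G.Subgraph) (v : V) : Option {v : V // v ∉ H.verts} :=
  open Classical in if h : v ∈ H.verts then none else some ⟨v, h⟩

lemma contractVert_of_notMem (a : {v : V // v ∉ H.verts}) : contractVert H a = some a := by
  simp [contractVert, a.2]

lemma contractVert_liftVert {a : {v : V // v ∉ H.verts}} {y : Option {v : V // v ∉ H.verts}}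
    (h : (contractGraph G H).Adj (some a) y) : contractVert H (liftVert H a y) = y := by
  rcases y with _ | b
  · simp [contractVert, liftVert, (neighborIn_spec h).1]
  · exact contractVert_of_notMem b

lemma adj_liftVert {a : {v : V // v ∉ H.verts}} {y : Option {v : V // v ∉ H.verts}}
    (h : (contractGraph G H).Adj (some a) y) : G.Adj a (liftVert H a y) := by
  rcases y with _ | b
  · exact (neighborIn_spec h).2
  · exact h

/-- The value `s(d, d)` at `s(v*, v*)` is junk: `G/H` has no loop at `v*`. -/
def liftEdge (H : G.Subgraph) (d : V) : Sym2 (Option {v : V // v ∉ H.verts}) → Sym2 V :=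
  Sym2.lift ⟨fun x y => match x, y with
    | some a, y => s(a.1, liftVert H a y)
    | none, some b => s(liftVert H b none, b.1)
    | none, none => s(d, d), by
    rintro (_ | a) (_ | b) <;> simp [liftVert, Sym2.eq_swap]⟩

lemma liftEdge_mk_some (d : V) (a : {v : V // v ∉ H.verts})
    (y : Option {v : V // v ∉ H.verts}) :
    liftEdge H d s(some a, y) = s(a.1, liftVert H a y) := rfl

lemma liftEdge_mem_edgeSet (d : V) {e : Sym2 (Option {v : V // v ∉ H.verts})}
    (he : e ∈ (contractGraph G H).edgeSet) : liftEdge H d e ∈ G.edgeSet := by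
  obtain ⟨a, y, hay, rfl⟩ := exists_eq_mk_some_of_mem_edgeSet_contractGraph he
  exact adj_liftVert hay

lemma liftEdge_notMem_edgeSet (d : V) {e : Sym2 (Option {v : V // v ∉ H.verts})}
    (he : e ∈ (contractGraph G H).edgeSet) : liftEdge H d e ∉ H.edgeSet := fun hH => by
  obtain ⟨a, y, -, rfl⟩ := exists_eq_mk_some_of_mem_edgeSet_contractGraph he
  exact a.2 (H.mem_verts_of_mem_edge hH (Sym2.mem_mk_left _ _))

lemma injOn_liftEdge (d : V) : Set.InjOn (liftEdge H d) (contractGraph G H).edgeSet := by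
  refine Set.LeftInvOn.injOn (f₁' := Sym2.map (contractVert H)) fun e he => ?_
  obtain ⟨a, y, hay, rfl⟩ := exists_eq_mk_some_of_mem_edgeSet_contractGraph he
  rw [liftEdge_mk_some, Sym2.map_mk, contractVert_of_notMem, contractVert_liftVert hay]

def liftSubgraph (H : G.Subgraph) (d : V) (K : (contractGraph G H).Subgraph) :
    G.Subgraph where
  verts := Subtype.val '' (some ⁻¹' K.verts) ∪ {v | none ∈ K.verts ∧ v ∈ H.verts}
  Adj a b := (none ∈ K.verts ∧ H.Adj a b) ∨ s(a, b) ∈ liftEdge H d '' K.edgeSet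
  adj_sub := by
    rintro a b (⟨-, h⟩ | ⟨e, he, hab⟩)
    · exact H.adj_sub h
    · rw [← SimpleGraph.mem_edgeSet, ← hab]
      exact liftEdge_mem_edgeSet d (K.edgeSet_subset he)
  edge_vert := by
    rintro a b (⟨hnone, h⟩ | ⟨e, he, hab⟩)
    · exact Or.inr ⟨hnone, H.edge_vert h⟩
    · obtain ⟨a', y, -, rfl⟩ := exists_eq_mk_some_of_mem_edgeSet_contractGraph
        (K.edgeSet_subset he)
      rw [liftEdge_mk_some, Sym2.eq_iff] at hab
      have hy : y ∈ K.verts := K.mem_verts_of_mem_edge he (Sym2.mem_mk_right _ _)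
      rcases hab with ⟨rfl, -⟩ | ⟨-, rfl⟩
      · exact Or.inl ⟨a', K.mem_verts_of_mem_edge he (Sym2.mem_mk_left _ _), rfl⟩
      · rcases y with _ | b
        · exact Or.inr ⟨hy, (neighborIn_spec (K.edgeSet_subset he)).1⟩
        · exact Or.inl ⟨b, hy, rfl⟩
  symm := ⟨fun a b h => by rwa [Sym2.eq_swap, H.adj_comm]⟩

lemma liftSubgraph_edgeSet (d : V) (K : (contractGraph G H).Subgraph) :
    (liftSubgraph H d K).edgeSet =
      {e | none ∈ K.verts ∧ e ∈ H.edgeSet} ∪ liftEdge H d '' K.edgeSet := by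
  ext e
  induction e using Sym2.ind with
  | _ a b => rfl

lemma liftSubgraph_verts_nonempty (hH : H.verts.Nonempty) (d : V)
    {K : (contractGraph G H).Subgraph} (hK : K.verts.Nonempty) :
    (liftSubgraph H d K).verts.Nonempty := by
  obtain ⟨_ | a, hx⟩ := hK
  · obtain ⟨v, hv⟩ := hH
    exact ⟨v, Or.inr ⟨hx, hv⟩⟩
  · exact ⟨a, Or.inl ⟨a, hx, rfl⟩⟩

variable [Finite V]

open Classical in
lemma ncard_liftSubgraph_verts (d : V) (K : (contractGraph G H).Subgraph) :
    (liftSubgraph H d K).verts.ncard =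
      (some ⁻¹' K.verts).ncard + if none ∈ K.verts then H.verts.ncard else 0 := by
  have hdisj : Disjoint (Subtype.val '' (some ⁻¹' K.verts)) H.verts := by
    rw [Set.disjoint_left]
    rintro _ ⟨a, -, rfl⟩
    exact a.2
  by_cases hnone : none ∈ K.verts
  · simp only [liftSubgraph, hnone, true_and, Set.ofPred_mem_eq, if_true]
    rw [Set.ncard_union_eq hdisj, Set.ncard_image_of_injective _ Subtype.val_injective]
  · simp only [liftSubgraph, hnone, false_and, Set.ofPred_false, Set.union_empty, if_false,
      add_zero]
    exact Set.ncard_image_of_injective _ Subtype.val_injective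

open Classical in
lemma ncard_liftSubgraph_edgeSet (d : V) (K : (contractGraph G H).Subgraph) :
    (liftSubgraph H d K).edgeSet.ncard =
      K.edgeSet.ncard + if none ∈ K.verts then H.edgeSet.ncard else 0 := by
  have hinj : (liftEdge H d '' K.edgeSet).ncard = K.edgeSet.ncard :=
    ((injOn_liftEdge d).mono K.edgeSet_subset).ncard_image
  rw [liftSubgraph_edgeSet]
  by_cases hnone : none ∈ K.verts
  · have hdisj : Disjoint H.edgeSet (liftEdge H d '' K.edgeSet) := by
      rw [Set.disjoint_right]
      rintro _ ⟨e, he, rfl⟩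
      exact liftEdge_notMem_edgeSet d (K.edgeSet_subset he)
    simp only [hnone, true_and, Set.ofPred_mem_eq, if_true]
    rw [Set.ncard_union_eq hdisj, hinj, add_comm]
  · simp only [hnone, false_and, Set.ofPred_false, Set.empty_union, if_false, add_zero]
    exact hinj

lemma subFreedom_liftSubgraph (hf : subFreedom H = 2) (d : V) (K : (contractGraph G H).Subgraph) :
    subFreedom (liftSubgraph H d K) = subFreedom K := by
  unfold subFreedom at hf ⊢
  rw [ncard_liftSubgraph_verts, ncard_liftSubgraph_edgeSet,
    Set.ncard_eq_ncard_preimage_some_add K.verts]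
  split_ifs <;> push_cast <;> linarith

theorem indep2_contractGraph (hG : Indep2 G) (hf : subFreedom H = 2) :
    Indep2 (contractGraph G H) := by
  intro K hK
  have hH := verts_nonempty_of_subFreedom_ne_zero (hf.trans_ne two_ne_zero)
  rw [← subFreedom_liftSubgraph hf hH.some K]
  exact hG _ (liftSubgraph_verts_nonempty hH _ hK)

end Contraction

section Maximal

variable {V : Type} [Finite V] {G : SimpleGraph V} {H : G.Subgraph} {v w : V}

lemma subFreedom_sup_subgraphOfAdj_of_mem (hvw : G.Adj v w) (hv : v ∈ H.verts)
    (hw : w ∈ H.verts) (hH : ¬H.Adj v w) :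
    subFreedom (H ⊔ G.subgraphOfAdj hvw) = subFreedom H - 1 := by
  have hV : (H ⊔ G.subgraphOfAdj hvw).verts = H.verts := by
    rw [Subgraph.verts_sup, subgraphOfAdj_verts, Set.union_eq_left]
    exact Set.insert_subset hv (Set.singleton_subset_iff.2 hw)
  have hE : (H ⊔ G.subgraphOfAdj hvw).edgeSet = insert s(v, w) H.edgeSet := by
    rw [Subgraph.edgeSet_sup, edgeSet_subgraphOfAdj, Set.union_singleton]
  unfold subFreedom
  rw [hV, hE, Set.ncard_insert_of_notMem (Subgraph.mem_edgeSet.not.2 hH)]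
  push_cast
  ring

lemma subFreedom_sup_subgraphOfAdj_of_notMem (hvw : G.Adj v w) (hv : v ∉ H.verts)
    (hw : w ∈ H.verts) : subFreedom (H ⊔ G.subgraphOfAdj hvw) = subFreedom H + 1 := by
  have hV : (H ⊔ G.subgraphOfAdj hvw).verts = insert v H.verts := by
    rw [Subgraph.verts_sup, subgraphOfAdj_verts, Set.union_insert, Set.union_singleton,
      Set.insert_eq_of_mem hw]
  have hE : (H ⊔ G.subgraphOfAdj hvw).edgeSet = insert s(v, w) H.edgeSet := by
    rw [Subgraph.edgeSet_sup, edgeSet_subgraphOfAdj, Set.union_singleton]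
  have hvwH : s(v, w) ∉ H.edgeSet := fun h =>
    hv (H.mem_verts_of_mem_edge h (Sym2.mem_mk_left _ _))
  unfold subFreedom
  rw [hV, hE, Set.ncard_insert_of_notMem hv, Set.ncard_insert_of_notMem hvwH]
  push_cast
  ring

theorem isInduced_of_indep2 (hG : Indep2 G) (hf : subFreedom H = 2) : H.IsInduced := by
  intro v hv w hw hvw
  by_contra hH
  have h := hG (H ⊔ G.subgraphOfAdj hvw) ⟨v, Or.inl hv⟩
  rw [subFreedom_sup_subgraphOfAdj_of_mem hvw hv hw hH, hf] at h
  norm_num at h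

theorem eq_of_adj_of_adj_of_maximal
    (hmax : ∀ K : G.Subgraph, K.verts.Nonempty → subFreedom K = 2 → H ≤ K → K = H)
    (hf : subFreedom H = 2) {x w₁ w₂ : V} (hx : x ∉ H.verts) (hw₁ : w₁ ∈ H.verts)
    (hw₂ : w₂ ∈ H.verts) (h₁ : G.Adj x w₁) (h₂ : G.Adj x w₂) : w₁ = w₂ := by
  by_contra hne
  set K₁ := H ⊔ G.subgraphOfAdj h₁
  have hxK₁ : x ∈ K₁.verts := Or.inr (by simp)
  have hK₁ : ¬K₁.Adj x w₂ := by
    rintro (h | h)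
    · exact hx (H.edge_vert h)
    · rcases Sym2.eq_iff.1 h with ⟨-, h⟩ | ⟨h, h'⟩
      exacts [hne h, hne (h'.trans h)]
  set K := K₁ ⊔ G.subgraphOfAdj h₂
  have hfK : subFreedom K = 2 := by
    rw [subFreedom_sup_subgraphOfAdj_of_mem h₂ hxK₁ (Or.inl hw₂) hK₁,
      subFreedom_sup_subgraphOfAdj_of_notMem h₁ hx hw₁, hf]
    norm_num
  have hKH := hmax K ⟨x, Or.inl hxK₁⟩ hfK (le_sup_left.trans le_sup_left)
  exact hx (hKH ▸ Or.inl hxK₁)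

theorem contractionIsSimple_of_maximal (hG : Indep2 G) (hf : subFreedom H = 2)
    (hmax : ∀ K : G.Subgraph, K.verts.Nonempty → subFreedom K = 2 → H ≤ K → K = H) :
    ContractionIsSimple G H :=
  ⟨fun _ _ ha hb hab => isInduced_of_indep2 hG hf ha hb hab,
    fun _ hx _ _ => eq_of_adj_of_adj_of_maximal hmax hf hx⟩

end Maximal

theorem contraction_indep2_general {V : Type} [Fintype V] (G : SimpleGraph V)
    (hG : Indep2 G) (H : G.Subgraph) (hf : subFreedom H = 2) :
    (ContractionIsSimple G H → Indep2 (contractGraph G H)) ∧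
    ((∀ K : G.Subgraph, K.verts.Nonempty → subFreedom K = 2 → H ≤ K → K = H) →
      H.IsInduced ∧ ContractionIsSimple G H) :=
  ⟨fun _ => indep2_contractGraph hG hf,
    fun hmax => ⟨isInduced_of_indep2 hG hf, contractionIsSimple_of_maximal hG hf hmax⟩⟩

/-- Let `G` be independent of type 2 and `H` a proper subgraph
with `f(H) = 2`.  (a) If the contraction `G/H` is a simple graph then it is
independent of type 2.  (b) If `H` is maximal with respect to inclusion among
subgraphs with freedom number 2 then `H` is vertex-induced and `G/H` is simple. -/
theorem contraction_indep2 {V : Type} [Fintype V] (G : SimpleGraph V)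
    (hG : Indep2 G) (H : G.Subgraph) (hne : H.verts.Nonempty)
    (hproper : H ≠ ⊤) (hf : subFreedom H = 2) :
    (ContractionIsSimple G H → Indep2 (contractGraph G H)) ∧
    ((∀ K : G.Subgraph, K.verts.Nonempty → subFreedom K = 2 → H ≤ K → K = H) →
      H.IsInduced ∧ ContractionIsSimple G H) :=
  contraction_indep2_general G hG H hf
end
end

section
/- Let G be a finite connected simple graph that is maximally independent of type 3, and let u, v be distinct vertices of G that are not adjacent in G. Then the graph G + (u,v), obtained from G by adding the edge (u,v), is an edge-disjoint union of two spanning trees. -/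
open SimpleGraph

noncomputable section

/-- `G` is an edge-disjoint union of two spanning trees. -/
def TwoSpanningTrees {V : Type} (G : SimpleGraph V) : Prop :=
  ∃ E₁ E₂ : Set (Sym2 V), E₁ ∪ E₂ = G.edgeSet ∧ Disjoint E₁ E₂ ∧
    (SimpleGraph.fromEdgeSet E₁).IsTree ∧ (SimpleGraph.fromEdgeSet E₂).IsTree


/-!
A Laman edge set `E` on `S` (`(2,3)`-sparse with `#E = 2 * #S - 3`) is built by Henneberg moves,
and the proof runs that construction backwards. Degree counting gives a vertex `w ∉ {u, v}` of
degree two or three. Removing it, and in degree three adding an edge `xy` between two of its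
neighbours, leaves a Laman edge set on `S \ {w}`; that some pair `xy` works is the tight-set
argument of Laman's theorem. By induction, `E + uv` splits into `T ⊆ E` with `#S - 1` edges
connecting `S` and a remainder that also connects `S`. Putting `w` back extends both parts,
subdividing `xy` in whichever part contains it. Both final parts are connected and have
`#S - 1` edges, so they are spanning trees.
-/

open Finset

namespace Finset

variable {V : Type*} [DecidableEq V]

lemma mem_sym2_erase_iff {S : Finset V} {w : V} {e : Sym2 V} :
    e ∈ (S.erase w).sym2 ↔ e ∈ S.sym2 ∧ w ∉ e := by
  simp only [mem_sym2_iff, mem_erase]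
  exact ⟨fun h => ⟨fun a ha => (h a ha).2, fun hw => (h w hw).1 rfl⟩,
    fun h a ha => ⟨fun haw => h.2 (haw ▸ ha), h.1 a ha⟩⟩

lemma eq_mk_of_mem_sym2_pair {u v : V} {e : Sym2 V} (he : e ∈ ({u, v} : Finset V).sym2)
    (hd : ¬ e.IsDiag) : e = s(u, v) := by
  induction e using Sym2.ind with
  | _ p q =>
    rw [mk_mem_sym2_iff, mem_insert, mem_singleton, mem_insert, mem_singleton] at he
    rw [Sym2.mk_isDiag_iff] at hd
    rcases he with ⟨rfl | rfl, rfl | rfl⟩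
    exacts [absurd rfl hd, rfl, Sym2.eq_swap, absurd rfl hd]

lemma inter_sym2_inter (E : Finset (Sym2 V)) (X Y : Finset V) :
    (E ∩ X.sym2) ∩ (E ∩ Y.sym2) = E ∩ (X ∩ Y).sym2 := by
  ext e
  simp only [mem_inter, mem_sym2_iff]
  exact ⟨fun h => ⟨h.1.1, fun a ha => ⟨h.1.2 a ha, h.2.2 a ha⟩⟩,
    fun h => ⟨⟨h.1, fun a ha => (h.2 a ha).1⟩, h.1, fun a ha => (h.2 a ha).2⟩⟩

lemma card_inter_sym2_add_card_inter_sym2_le (E : Finset (Sym2 V)) (X Y : Finset V) :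
    #(E ∩ X.sym2) + #(E ∩ Y.sym2) ≤ #(E ∩ (X ∪ Y).sym2) + #(E ∩ (X ∩ Y).sym2) := by
  rw [← card_union_add_card_inter, inter_sym2_inter]
  gcongr
  exact union_subset (inter_subset_inter_left (sym2_mono subset_union_left))
    (inter_subset_inter_left (sym2_mono subset_union_right))

lemma disjoint_inter_sym2 {E : Finset (Sym2 V)} (hE : ∀ e ∈ E, ¬ e.IsDiag) {X Y : Finset V}
    (hXY : #(X ∩ Y) ≤ 1) : Disjoint (E ∩ X.sym2) (E ∩ Y.sym2) := by
  rw [disjoint_iff_inter_eq_empty, inter_sym2_inter, eq_empty_iff_forall_notMem]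
  intro e he
  rw [mem_inter] at he
  induction e using Sym2.ind with
  | _ p q =>
    rw [mk_mem_sym2_iff] at he
    exact hE _ he.1 (Sym2.mk_isDiag_iff.mpr (card_le_one.mp hXY p he.2.1 q he.2.2))

variable {S : Finset V} {E : Finset (Sym2 V)}

lemma card_inter_sym2_erase_add_card_filter_mem (hE : E ⊆ S.sym2) (w : V) :
    #(E ∩ (S.erase w).sym2) + #{e ∈ E | w ∈ e} = #E := by
  have : E ∩ (S.erase w).sym2 = {e ∈ E | w ∉ e} := by
    ext e
    simp only [mem_inter, mem_filter, mem_sym2_erase_iff]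
    exact ⟨fun h => ⟨h.1, h.2.2⟩, fun h => ⟨h.1, hE h.1, h.2⟩⟩
  rw [this, add_comm, card_filter_add_card_filter_not]

lemma card_filter_mem_eq_card_filter_mk_mem (hE : E ⊆ S.sym2) (w : V) :
    #{e ∈ E | w ∈ e} = #{x ∈ S | s(w, x) ∈ E} := by
  have : {e ∈ E | w ∈ e} = {x ∈ S | s(w, x) ∈ E}.image (fun x => s(w, x)) := by
    ext e
    simp only [mem_filter, mem_image]
    constructor
    · rintro ⟨he, hw⟩
      obtain ⟨x, rfl⟩ := Sym2.mem_iff_exists.mp hw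
      exact ⟨x, ⟨(mk_mem_sym2_iff.mp (hE he)).2, he⟩, rfl⟩
    · rintro ⟨x, ⟨-, hx⟩, rfl⟩
      exact ⟨hx, Sym2.mem_mk_left _ _⟩
  rw [this, card_image_of_injective _ fun x y h => Sym2.congr_right.mp h]

lemma exists_mk_mem_of_card_filter_mem_eq_two (hE : E ⊆ S.sym2) {w : V}
    (h : #{e ∈ E | w ∈ e} = 2) : ∃ x y, x ≠ y ∧ s(w, x) ∈ E ∧ s(w, y) ∈ E := by
  obtain ⟨x, y, hxy, hN⟩ := card_eq_two.mp (card_filter_mem_eq_card_filter_mk_mem hE w ▸ h)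
  have hmem : ∀ a ∈ ({x, y} : Finset V), s(w, a) ∈ E := fun a ha => by
    rw [← hN] at ha
    exact (mem_filter.mp ha).2
  exact ⟨x, y, hxy, hmem x (by simp), hmem y (by simp)⟩

lemma exists_mk_mem_of_card_filter_mem_eq_three (hE : E ⊆ S.sym2) {w : V}
    (h : #{e ∈ E | w ∈ e} = 3) :
    ∃ a b c, a ≠ b ∧ a ≠ c ∧ b ≠ c ∧ s(w, a) ∈ E ∧ s(w, b) ∈ E ∧ s(w, c) ∈ E := by
  obtain ⟨a, b, c, hab, hac, hbc, hN⟩ :=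
    card_eq_three.mp (card_filter_mem_eq_card_filter_mk_mem hE w ▸ h)
  have hmem : ∀ x ∈ ({a, b, c} : Finset V), s(w, x) ∈ E := fun x hx => by
    rw [← hN] at hx
    exact (mem_filter.mp hx).2
  exact ⟨a, b, c, hab, hac, hbc, hmem a (by simp), hmem b (by simp), hmem c (by simp)⟩

lemma sum_card_filter_mem (hE : E ⊆ S.sym2) (hloop : ∀ e ∈ E, ¬ e.IsDiag) :
    ∑ x ∈ S, #{e ∈ E | x ∈ e} = 2 * #E := by
  have := sum_card_bipartiteAbove_eq_sum_card_bipartiteBelow (s := S) (t := E) (r := (· ∈ ·))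
  simp only [bipartiteAbove, bipartiteBelow] at this
  rw [this, mul_comm, ← smul_eq_mul, ← sum_const]
  refine sum_congr rfl fun e he => ?_
  rw [← Sym2.card_toFinset_of_not_isDiag e (hloop e he)]
  congr 1
  ext x
  simp only [mem_filter, Sym2.mem_toFinset, and_iff_right_iff_imp]
  exact fun hx => mem_sym2_iff.mp (hE he) x hx

end Finset

namespace SimpleGraph

variable {V : Type*}

lemma Reachable.mono_of_forall_adj {G H : SimpleGraph V} (h : ∀ x y, G.Adj x y → H.Reachable x y)
    {x y : V} (hxy : G.Reachable x y) : H.Reachable x y := by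
  rw [reachable_eq_reflTransGen] at hxy ⊢
  exact Relation.reflTransGen_closed (fun a b hab => reachable_eq_reflTransGen ▸ h a b hab) _ _ hxy

lemma reachable_fromEdgeSet_of_mk_mem {T : Set (Sym2 V)} {p q : V} (h : s(p, q) ∈ T) :
    (fromEdgeSet T).Reachable p q := by
  by_cases hpq : p = q
  · exact hpq ▸ Reachable.refl p
  · exact ((fromEdgeSet_adj _).mpr ⟨h, hpq⟩).reachable

lemma edgeSet_fromEdgeSet_of_forall_not_isDiag {s : Set (Sym2 V)} (hs : ∀ e ∈ s, ¬ e.IsDiag) :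
    (fromEdgeSet s).edgeSet = s := by
  rw [edgeSet_fromEdgeSet, sdiff_eq_left, Set.disjoint_left]
  exact hs

lemma edgeSet_induce_top_coe [DecidableEq V] {G : SimpleGraph V} [Fintype G.edgeSet]
    (X : Finset V) :
    ((⊤ : G.Subgraph).induce (X : Set V)).edgeSet = ↑(G.edgeFinset ∩ X.sym2) := by
  ext e
  induction e using Sym2.ind with
  | _ p q =>
    simp only [Subgraph.mem_edgeSet, Subgraph.induce_adj, Subgraph.top_adj, coe_inter,
      Set.mem_inter_iff, coe_edgeFinset, mem_edgeSet, mem_coe, mk_mem_sym2_iff]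
    tauto

end SimpleGraph

section Sparsity

variable {V : Type*} [DecidableEq V]

/-- `(2,3)`-sparsity, the paper's independence of type 3. -/
def IsSparse (S : Finset V) (E : Finset (Sym2 V)) : Prop :=
  ∀ X ⊆ S, 2 ≤ #X → #(E ∩ X.sym2) + 3 ≤ 2 * #X

def IsTight (E : Finset (Sym2 V)) (X : Finset V) : Prop :=
  2 ≤ #X ∧ #(E ∩ X.sym2) + 3 = 2 * #X

variable {S : Finset V} {E F : Finset (Sym2 V)}

lemma IsSparse.anti {S' : Finset V} (hE : IsSparse S E) (hS : S' ⊆ S) (hF : F ⊆ E) :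
    IsSparse S' F := fun X hX h2 =>
  (Nat.add_le_add_right (card_le_card (inter_subset_inter_right hF)) 3).trans
    (hE X (hX.trans hS) h2)

lemma IsSparse.isTight_union (hE : IsSparse S E) {X Y : Finset V} (hXS : X ⊆ S) (hYS : Y ⊆ S)
    (hX : IsTight E X) (hY : IsTight E Y) (hXY : 2 ≤ #(X ∩ Y)) : IsTight E (X ∪ Y) := by
  obtain ⟨hX2, hXt⟩ := hX
  obtain ⟨-, hYt⟩ := hY
  have h2 : 2 ≤ #(X ∪ Y) := hX2.trans (card_le_card subset_union_left)
  have := card_inter_sym2_add_card_inter_sym2_le E X Y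
  have := card_union_add_card_inter X Y
  have := hE _ (union_subset hXS hYS) h2
  have := hE _ (inter_subset_left.trans hXS) hXY
  exact ⟨h2, by omega⟩

/-- The edge sets of `X`, `Y`, `Z` are disjoint, while their union has at most
`#X + #Y + #Z - 3` vertices. -/
lemma IsSparse.isTight_union_union (hE : IsSparse S E) (hloop : ∀ e ∈ E, ¬ e.IsDiag)
    {X Y Z : Finset V} (hXS : X ⊆ S) (hYS : Y ⊆ S) (hZS : Z ⊆ S)
    (hX : IsTight E X) (hY : IsTight E Y) (hZ : IsTight E Z)
    (hXY : #(X ∩ Y) ≤ 1) (hXZ : #(X ∩ Z) ≤ 1) (hYZ : #(Y ∩ Z) ≤ 1) {a b c : V}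
    (haX : a ∈ X) (haY : a ∈ Y) (hbX : b ∈ X) (hbZ : b ∈ Z) (hcY : c ∈ Y) (hcZ : c ∈ Z)
    (hbc : b ≠ c) : IsTight E (X ∪ Y ∪ Z) := by
  obtain ⟨hX2, hXt⟩ := hX
  obtain ⟨-, hYt⟩ := hY
  obtain ⟨-, hZt⟩ := hZ
  have hU2 : 2 ≤ #(X ∪ Y ∪ Z) :=
    hX2.trans (card_le_card (subset_union_left.trans subset_union_left))
  have hedges :
      #(E ∩ X.sym2) + #(E ∩ Y.sym2) + #(E ∩ Z.sym2) ≤ #(E ∩ (X ∪ Y ∪ Z).sym2) := by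
    have hd : Disjoint (E ∩ X.sym2 ∪ E ∩ Y.sym2) (E ∩ Z.sym2) :=
      disjoint_union_left.mpr ⟨disjoint_inter_sym2 hloop hXZ, disjoint_inter_sym2 hloop hYZ⟩
    rw [← card_union_of_disjoint (disjoint_inter_sym2 hloop hXY), ← card_union_of_disjoint hd]
    refine card_le_card (union_subset (union_subset ?_ ?_) ?_) <;>
      refine inter_subset_inter_left (sym2_mono ?_)
    exacts [subset_union_left.trans subset_union_left, subset_union_right.trans subset_union_left,
      subset_union_right]
  have hXY1 : 1 ≤ #(X ∩ Y) := card_pos.mpr ⟨a, mem_inter.mpr ⟨haX, haY⟩⟩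
  have hXYZ2 : 2 ≤ #((X ∪ Y) ∩ Z) := (card_pair hbc).symm.le.trans <| card_le_card <|
    insert_subset (mem_inter.mpr ⟨mem_union_left _ hbX, hbZ⟩)
      (singleton_subset_iff.mpr (mem_inter.mpr ⟨mem_union_right _ hcY, hcZ⟩))
  have := card_union_add_card_inter X Y
  have := card_union_add_card_inter (X ∪ Y) Z
  have := hE _ (union_subset (union_subset hXS hYS) hZS) hU2
  exact ⟨hU2, by omega⟩

lemma IsSparse.insert_or_exists_isTight (hE : IsSparse S E) {x y : V} (hx : x ∈ S) (hy : y ∈ S)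
    (hxy : x ≠ y) :
    (s(x, y) ∉ E ∧ IsSparse S (insert s(x, y) E)) ∨ ∃ X ⊆ S, x ∈ X ∧ y ∈ X ∧ IsTight E X := by
  have hpair : #({x, y} : Finset V) = 2 := card_pair hxy
  have hpairS : {x, y} ⊆ S := insert_subset hx (singleton_subset_iff.mpr hy)
  by_cases hmem : s(x, y) ∈ E
  · refine Or.inr ⟨{x, y}, hpairS, mem_insert_self _ _, mem_insert_of_mem (mem_singleton_self _),
      hpair.ge, ?_⟩
    have h1 : 0 < #(E ∩ ({x, y} : Finset V).sym2) :=
      card_pos.mpr ⟨_, mem_inter.mpr ⟨hmem, mk_mem_sym2_iff.mpr (by simp)⟩⟩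
    have := hE _ hpairS hpair.ge
    omega
  by_cases hsp : IsSparse S (insert s(x, y) E)
  · exact Or.inl ⟨hmem, hsp⟩
  simp only [IsSparse, not_forall, not_le] at hsp
  obtain ⟨X, hXS, hX2, hlt⟩ := hsp
  have hle := hE X hXS hX2
  by_cases hin : s(x, y) ∈ X.sym2
  · rw [insert_inter_of_mem hin, card_insert_of_notMem fun h => hmem (mem_inter.mp h).1] at hlt
    obtain ⟨hxX, hyX⟩ := mk_mem_sym2_iff.mp hin
    exact Or.inr ⟨X, hXS, hxX, hyX, hX2, by omega⟩
  · rw [insert_inter_of_notMem hin] at hlt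
    omega

lemma IsSparse.card_inter_sym2_add_four_le (hE : IsSparse S E) {w a b c : V} (hw : w ∈ S)
    {X : Finset V} (hXS : X ⊆ S) (hwX : w ∉ X) (ha : a ∈ X) (hb : b ∈ X) (hc : c ∈ X)
    (hab : a ≠ b) (hac : a ≠ c) (hbc : b ≠ c)
    (hwa : s(w, a) ∈ E) (hwb : s(w, b) ∈ E) (hwc : s(w, c) ∈ E) :
    #(E ∩ X.sym2) + 4 ≤ 2 * #X := by
  have hX2 : 2 ≤ #X := (card_pair hab).symm.le.trans
    (card_le_card (insert_subset ha (singleton_subset_iff.mpr hb)))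
  have hsp := hE (insert w X) (insert_subset hw hXS)
    (hX2.trans (card_le_card (subset_insert _ _)))
  rw [card_insert_of_notMem hwX] at hsp
  have hnew : Disjoint {s(w, a), s(w, b), s(w, c)} (E ∩ X.sym2) := by
    simp only [disjoint_insert_left, disjoint_singleton_left, mem_inter, mk_mem_sym2_iff]
    exact ⟨fun h => hwX h.2.1, fun h => hwX h.2.1, fun h => hwX h.2.1⟩
  have hcard : #({s(w, a), s(w, b), s(w, c)} : Finset (Sym2 V)) = 3 :=
    card_eq_three.mpr ⟨_, _, _, Sym2.congr_right.not.mpr hab, Sym2.congr_right.not.mpr hac,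
      Sym2.congr_right.not.mpr hbc, rfl⟩
  have hsub : {s(w, a), s(w, b), s(w, c)} ∪ E ∩ X.sym2 ⊆ E ∩ (insert w X).sym2 := by
    refine union_subset ?_ (inter_subset_inter_left (sym2_mono (subset_insert _ _)))
    simp only [insert_subset_iff, singleton_subset_iff, mem_inter, mk_mem_sym2_iff, mem_insert,
      true_or, ha, hb, hc, or_true, and_true]
    exact ⟨hwa, hwb, hwc⟩
  have := card_le_card hsub
  rw [card_union_of_disjoint hnew, hcard] at this
  omega

lemma IsSparse.exists_pair_insert (hE : IsSparse S E) (hloop : ∀ e ∈ E, ¬ e.IsDiag)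
    {a b c : V} (ha : a ∈ S) (hb : b ∈ S) (hc : c ∈ S) (hab : a ≠ b) (hac : a ≠ c) (hbc : b ≠ c)
    (hnt : ∀ X ⊆ S, a ∈ X → b ∈ X → c ∈ X → ¬ IsTight E X) :
    (s(a, b) ∉ E ∧ IsSparse S (insert s(a, b) E)) ∨
    (s(a, c) ∉ E ∧ IsSparse S (insert s(a, c) E)) ∨
    (s(b, c) ∉ E ∧ IsSparse S (insert s(b, c) E)) := by
  rcases hE.insert_or_exists_isTight ha hb hab with h | ⟨X, hXS, haX, hbX, hX⟩
  · exact Or.inl h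
  rcases hE.insert_or_exists_isTight ha hc hac with h | ⟨Y, hYS, haY, hcY, hY⟩
  · exact Or.inr (Or.inl h)
  rcases hE.insert_or_exists_isTight hb hc hbc with h | ⟨Z, hZS, hbZ, hcZ, hZ⟩
  · exact Or.inr (Or.inr h)
  exfalso
  by_cases hXY : 2 ≤ #(X ∩ Y)
  · exact hnt _ (union_subset hXS hYS) (mem_union_left _ haX) (mem_union_left _ hbX)
      (mem_union_right _ hcY) (hE.isTight_union hXS hYS hX hY hXY)
  by_cases hXZ : 2 ≤ #(X ∩ Z)
  · exact hnt _ (union_subset hXS hZS) (mem_union_left _ haX) (mem_union_left _ hbX)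
      (mem_union_right _ hcZ) (hE.isTight_union hXS hZS hX hZ hXZ)
  by_cases hYZ : 2 ≤ #(Y ∩ Z)
  · exact hnt _ (union_subset hYS hZS) (mem_union_left _ haY) (mem_union_right _ hbZ)
      (mem_union_left _ hcY) (hE.isTight_union hYS hZS hY hZ hYZ)
  exact hnt _ (union_subset (union_subset hXS hYS) hZS) (mem_union_left _ (mem_union_left _ haX))
    (mem_union_left _ (mem_union_left _ hbX)) (mem_union_right _ hcZ)
    (hE.isTight_union_union hloop hXS hYS hZS hX hY hZ (by omega) (by omega) (by omega)
      haX haY hbX hbZ hcY hcZ hbc)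

end Sparsity

section Laman

variable {V : Type*} [DecidableEq V]

/-- Edge sets of Laman graphs on `S`: the paper's maximally independent graphs of type 3. -/
structure IsLamanOn (S : Finset V) (E : Finset (Sym2 V)) : Prop where
  subset_sym2 : E ⊆ S.sym2
  not_isDiag : ∀ e ∈ E, ¬ e.IsDiag
  isSparse : IsSparse S E
  card_add_three : #E + 3 = 2 * #S

variable {S : Finset V} {E : Finset (Sym2 V)}

lemma IsLamanOn.mem_erase_of_mk_mem (hL : IsLamanOn S E) {w a : V} (h : s(w, a) ∈ E) :
    a ∈ S.erase w :=
  mem_erase.mpr ⟨fun haw => hL.not_isDiag _ h (Sym2.mk_isDiag_iff.mpr haw.symm),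
    (mk_mem_sym2_iff.mp (hL.subset_sym2 h)).2⟩

lemma IsLamanOn.two_le_card_filter_mem (hL : IsLamanOn S E) (hS : 3 ≤ #S) {w : V} (hw : w ∈ S) :
    2 ≤ #{e ∈ E | w ∈ e} := by
  have := hL.isSparse (S.erase w) (erase_subset _ _) (by rw [card_erase_of_mem hw]; omega)
  have := card_inter_sym2_erase_add_card_filter_mem hL.subset_sym2 w
  have := card_erase_of_mem hw
  have := hL.card_add_three
  omega

/-- The degrees sum to `2 * #E = 4 * #S - 6`, so they cannot all be `≥ 4` off `u` and `v`. -/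
lemma IsLamanOn.exists_card_filter_mem_le_three (hL : IsLamanOn S E) (hS : 3 ≤ #S) {u v : V}
    (hu : u ∈ S) (hv : v ∈ S) (huv : u ≠ v) :
    ∃ w ∈ S, w ≠ u ∧ w ≠ v ∧ #{e ∈ E | w ∈ e} ≤ 3 := by
  by_contra! hcon
  have hv' : v ∈ S.erase u := mem_erase.mpr ⟨huv.symm, hv⟩
  have hrest : 4 * #((S.erase u).erase v) ≤ ∑ x ∈ (S.erase u).erase v, #{e ∈ E | x ∈ e} := by
    rw [mul_comm, ← smul_eq_mul, ← sum_const]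
    refine sum_le_sum fun x hx => ?_
    obtain ⟨hxv, hx'⟩ := mem_erase.mp hx
    obtain ⟨hxu, hxS⟩ := mem_erase.mp hx'
    exact hcon x hxS hxu hxv
  have := sum_erase_add _ (fun x => #{e ∈ E | x ∈ e}) hv'
  have := sum_erase_add _ (fun x => #{e ∈ E | x ∈ e}) hu
  have := card_erase_of_mem hv'
  have := card_erase_of_mem hu
  have := sum_card_filter_mem hL.subset_sym2 hL.not_isDiag
  have := hL.two_le_card_filter_mem hS hu
  have := hL.two_le_card_filter_mem hS hv
  have := hL.card_add_three
  omega

lemma IsLamanOn.erase (hL : IsLamanOn S E) {w : V} (hw : w ∈ S) (hdeg : #{e ∈ E | w ∈ e} = 2) :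
    IsLamanOn (S.erase w) (E ∩ (S.erase w).sym2) where
  subset_sym2 := inter_subset_right
  not_isDiag e he := hL.not_isDiag e (mem_inter.mp he).1
  isSparse := hL.isSparse.anti (erase_subset _ _) inter_subset_left
  card_add_three := by
    have := card_inter_sym2_erase_add_card_filter_mem hL.subset_sym2 w
    have := card_erase_of_mem hw
    have := hL.card_add_three
    omega

/-- The inverse Henneberg 2 move. -/
lemma IsLamanOn.erase_insert (hL : IsLamanOn S E) {w : V} (hw : w ∈ S)
    (hdeg : #{e ∈ E | w ∈ e} = 3) {a b c : V} (hab : a ≠ b) (hac : a ≠ c) (hbc : b ≠ c)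
    (hwa : s(w, a) ∈ E) (hwb : s(w, b) ∈ E) (hwc : s(w, c) ∈ E) :
    IsLamanOn (S.erase w) (insert s(a, b) (E ∩ (S.erase w).sym2)) ∨
    IsLamanOn (S.erase w) (insert s(a, c) (E ∩ (S.erase w).sym2)) ∨
    IsLamanOn (S.erase w) (insert s(b, c) (E ∩ (S.erase w).sym2)) := by
  have hcard : #(E ∩ (S.erase w).sym2) + 4 = 2 * #(S.erase w) := by
    have := card_inter_sym2_erase_add_card_filter_mem hL.subset_sym2 w
    have := card_erase_of_mem hw
    have := hL.card_add_three
    omega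
  set S' := S.erase w
  set E' := E ∩ S'.sym2
  have hloop : ∀ e ∈ E', ¬ e.IsDiag := fun e he => hL.not_isDiag e (mem_inter.mp he).1
  have hlaman : ∀ x ∈ S', ∀ y ∈ S', x ≠ y →
      s(x, y) ∉ E' ∧ IsSparse S' (insert s(x, y) E') → IsLamanOn S' (insert s(x, y) E') :=
    fun x hx y hy hxy h =>
      { subset_sym2 := insert_subset (mk_mem_sym2_iff.mpr ⟨hx, hy⟩) inter_subset_right
        not_isDiag := forall_mem_insert _ _ _ |>.mpr
          ⟨fun hd => hxy (Sym2.mk_isDiag_iff.mp hd), hloop⟩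
        isSparse := h.2
        card_add_three := by rw [card_insert_of_notMem h.1]; omega }
  have ha := hL.mem_erase_of_mk_mem hwa
  have hb := hL.mem_erase_of_mk_mem hwb
  have hc := hL.mem_erase_of_mk_mem hwc
  have hnt : ∀ X ⊆ S', a ∈ X → b ∈ X → c ∈ X → ¬ IsTight E' X := by
    intro X hX haX hbX hcX hXt
    have := hL.isSparse.card_inter_sym2_add_four_le hw (hX.trans (erase_subset _ _))
      (fun hwX => (mem_erase.mp (hX hwX)).1 rfl) haX hbX hcX hab hac hbc hwa hwb hwc
    have : #(E' ∩ X.sym2) ≤ #(E ∩ X.sym2) :=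
      card_le_card (inter_subset_inter_right inter_subset_left)
    exact absurd hXt.2 (by omega)
  exact ((hL.isSparse.anti (erase_subset _ _) inter_subset_left).exists_pair_insert hloop
    ha hb hc hab hac hbc hnt).imp (hlaman a ha b hb hab)
      (Or.imp (hlaman a ha c hc hac) (hlaman b hb c hc hbc))

end Laman

section Connectivity

variable {V : Type*} {S : Finset V} {T T' : Finset (Sym2 V)}

def IsConnectedOn (S : Finset V) (T : Finset (Sym2 V)) : Prop :=
  ∀ x ∈ S, ∀ y ∈ S, (fromEdgeSet (T : Set (Sym2 V))).Reachable x y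

lemma isConnectedOn_pair [DecidableEq V] {u v : V} (h : s(u, v) ∈ T) :
    IsConnectedOn {u, v} T := by
  have huv := reachable_fromEdgeSet_of_mk_mem (T := (T : Set (Sym2 V))) h
  simp only [IsConnectedOn, mem_insert, mem_singleton]
  rintro x (rfl | rfl) y (rfl | rfl)
  exacts [Reachable.rfl, huv, huv.symm, Reachable.rfl]

lemma IsConnectedOn.of_reachable (hT : IsConnectedOn S T)
    (h : ∀ p q, s(p, q) ∈ T → (fromEdgeSet (T' : Set (Sym2 V))).Reachable p q) :
    IsConnectedOn S T' :=
  fun x hx y hy =>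
    (hT x hx y hy).mono_of_forall_adj fun p q hpq => h p q ((fromEdgeSet_adj _).mp hpq).1

lemma IsConnectedOn.insert_of_reachable [DecidableEq V] (hT : IsConnectedOn S T) {w z : V}
    (hz : z ∈ S) (hwz : (fromEdgeSet (T : Set (Sym2 V))).Reachable w z) :
    IsConnectedOn (insert w S) T := by
  have hw : ∀ y ∈ insert w S, (fromEdgeSet (T : Set (Sym2 V))).Reachable w y := by
    rintro y hy
    rcases mem_insert.mp hy with rfl | hy
    exacts [Reachable.rfl, hwz.trans (hT z hz y hy)]
  intro x hx y hy
  rcases mem_insert.mp hx with rfl | hx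
  exacts [hw y hy, (hw x (mem_insert_of_mem hx)).symm.trans (hw y hy)]

lemma IsConnectedOn.insert_of_subset [DecidableEq V] (hT : IsConnectedOn S T) (hTT' : T ⊆ T')
    {w z : V} (hz : z ∈ S) (hwz : s(w, z) ∈ T') : IsConnectedOn (insert w S) T' :=
  IsConnectedOn.insert_of_reachable
    (hT.of_reachable fun _ _ h => reachable_fromEdgeSet_of_mk_mem (mem_coe.mpr (hTT' h))) hz
    (reachable_fromEdgeSet_of_mk_mem (mem_coe.mpr hwz))

lemma IsConnectedOn.insert_of_subset_insert [DecidableEq V] (hT : IsConnectedOn S T) {w x y : V}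
    (hTT' : T ⊆ insert s(x, y) T') (hx : x ∈ S) (hwx : s(w, x) ∈ T') (hwy : s(w, y) ∈ T') :
    IsConnectedOn (insert w S) T' := by
  have hrx := reachable_fromEdgeSet_of_mk_mem (mem_coe.mpr hwx)
  have hry := reachable_fromEdgeSet_of_mk_mem (mem_coe.mpr hwy)
  refine (hT.of_reachable fun p q h => ?_).insert_of_reachable hx hrx
  rcases mem_insert.mp (hTT' h) with hpq | h
  · rcases Sym2.eq_iff.mp hpq with ⟨rfl, rfl⟩ | ⟨rfl, rfl⟩
    exacts [hrx.symm.trans hry, hry.symm.trans hrx]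
  · exact reachable_fromEdgeSet_of_mk_mem (mem_coe.mpr h)

lemma isTree_fromEdgeSet [Fintype V] (hT : IsConnectedOn univ T) (hloop : ∀ e ∈ T, ¬ e.IsDiag)
    (hcard : #T + 1 = Fintype.card V) : (fromEdgeSet (T : Set (Sym2 V))).IsTree := by
  have hne : Nonempty V := Fintype.card_pos_iff.mp (by omega)
  rw [isTree_iff_connected_and_card, edgeSet_fromEdgeSet_of_forall_not_isDiag hloop, Nat.card_coe_set_eq, Set.ncard_coe_finset,
    Nat.card_eq_fintype_card]
  exact ⟨(connected_iff _).mpr ⟨fun x y => hT x (mem_univ x) y (mem_univ y), hne⟩, hcard⟩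

end Connectivity

section TreeSplit

variable {V : Type*} [DecidableEq V]

def HasTreeSplit (S : Finset V) (E : Finset (Sym2 V)) (u v : V) : Prop :=
  ∃ T ⊆ E, #T + 1 = #S ∧ IsConnectedOn S T ∧ IsConnectedOn S (insert s(u, v) (E \ T))

variable {S : Finset V} {E E' : Finset (Sym2 V)} {u v w x y z : V}

lemma hasTreeSplit_pair (huv : u ≠ v) : HasTreeSplit {u, v} {s(u, v)} u v :=
  ⟨{s(u, v)}, subset_rfl, by rw [card_singleton, card_pair huv],
    isConnectedOn_pair (mem_singleton_self _), isConnectedOn_pair (mem_insert_self _ _)⟩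

lemma HasTreeSplit.insert_two (h : HasTreeSplit S E' u v) (hE' : E' ⊆ E)
    (hwE' : ∀ e ∈ E', w ∉ e) (hwS : w ∉ S) (hx : x ∈ S) (hy : y ∈ S) (hxy : x ≠ y)
    (hwx : s(w, x) ∈ E) (hwy : s(w, y) ∈ E) : HasTreeSplit (insert w S) E u v := by
  obtain ⟨T, hTE, hTc, hT, hF⟩ := h
  have hwT : ∀ a, s(w, a) ∉ T := fun a ha => hwE' _ (hTE ha) (Sym2.mem_mk_left _ _)
  refine ⟨insert s(w, x) T, insert_subset hwx (hTE.trans hE'), ?_,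
    hT.insert_of_subset (subset_insert _ _) hx (mem_insert_self _ _),
    hF.insert_of_subset ?_ hy (mem_insert_of_mem ?_)⟩
  · rw [card_insert_of_notMem (hwT x), card_insert_of_notMem hwS, hTc]
  · refine insert_subset_insert _ fun e he => ?_
    grind [Sym2.mem_mk_left]
  · grind [Sym2.congr_right]

lemma HasTreeSplit.insert_three (h : HasTreeSplit S (insert s(x, y) E') u v) (hE' : E' ⊆ E)
    (hwE : ∀ e ∈ insert s(x, y) E', w ∉ e) (hwS : w ∉ S) (hx : x ∈ S) (hz : z ∈ S)
    (hxy : x ≠ y) (hxz : x ≠ z) (hyz : y ≠ z)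
    (hwx : s(w, x) ∈ E) (hwy : s(w, y) ∈ E) (hwz : s(w, z) ∈ E) :
    HasTreeSplit (insert w S) E u v := by
  obtain ⟨T, hTE, hTc, hT, hF⟩ := h
  have hwT : ∀ a, s(w, a) ∉ T := fun a ha => hwE _ (hTE ha) (Sym2.mem_mk_left _ _)
  have hwne {a b : V} (h : a ≠ b) : s(w, a) ≠ s(w, b) := Sym2.congr_right.not.mpr h
  by_cases hxyT : s(x, y) ∈ T
  · have hTE' : T.erase s(x, y) ⊆ E' := fun e he =>
      (mem_insert.mp (hTE (mem_of_mem_erase he))).resolve_left (ne_of_mem_erase he)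
    refine ⟨_, insert_subset hwx (insert_subset hwy (hTE'.trans hE')), ?_,
      hT.insert_of_subset_insert ?_ hx (mem_insert_self _ _)
        (mem_insert_of_mem (mem_insert_self _ _)),
      hF.insert_of_subset (insert_subset_insert _ fun e he => ?_) hz (mem_insert_of_mem ?_)⟩
    · have := card_pos.mpr ⟨_, hxyT⟩
      rw [card_insert_of_notMem fun h =>
          (mem_insert.mp h).elim (hwne hxy) fun h => hwT x (mem_of_mem_erase h),
        card_insert_of_notMem fun h => hwT y (mem_of_mem_erase h), card_erase_of_mem hxyT,
        card_insert_of_notMem hwS]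
      omega
    · exact (insert_erase hxyT).symm.subset.trans
        (insert_subset_insert _ ((subset_insert _ _).trans (subset_insert _ _)))
    · have heE' : e ∈ E' := (mem_insert.mp (mem_sdiff.mp he).1).resolve_left
        fun h => (mem_sdiff.mp he).2 (h ▸ hxyT)
      have := hwE e (mem_insert_of_mem heE')
      simp only [mem_sdiff, mem_insert, mem_erase] at he ⊢
      grind [Sym2.mem_mk_left]
    · simp only [mem_sdiff, mem_insert, not_or]
      exact ⟨hwz, hwne hxz.symm, hwne hyz.symm, fun h => hwT z (mem_of_mem_erase h)⟩
  · refine ⟨insert s(w, z) T, insert_subset hwz fun e he => ?_, ?_,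
      hT.insert_of_subset (subset_insert _ _) hz (mem_insert_self _ _),
      hF.insert_of_subset_insert (y := y) (fun e he => ?_) hx (mem_insert_of_mem ?_)
        (mem_insert_of_mem ?_)⟩
    · exact hE' ((mem_insert.mp (hTE he)).resolve_left fun h => hxyT (h ▸ he))
    · rw [card_insert_of_notMem (hwT z), card_insert_of_notMem hwS, hTc]
    · have := hwE e
      simp only [mem_sdiff, mem_insert] at he ⊢
      grind [Sym2.mem_mk_left]
    · simp only [mem_sdiff, mem_insert, not_or]
      exact ⟨hwx, hwne hxz, hwT x⟩
    · simp only [mem_sdiff, mem_insert, not_or]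
      exact ⟨hwy, hwne hyz, hwT y⟩

lemma IsLamanOn.hasTreeSplit (hL : IsLamanOn S E) (hu : u ∈ S) (hv : v ∈ S) (huv : u ≠ v) :
    HasTreeSplit S E u v := by
  induction S using Finset.strongInduction generalizing E with
  | H S ih =>
  have huvS : {u, v} ⊆ S := insert_subset hu (singleton_subset_iff.mpr hv)
  rcases (card_pair huv ▸ card_le_card huvS).eq_or_lt with h2 | h3
  · obtain rfl := (eq_of_subset_of_card_le huvS (by rw [card_pair huv, h2])).symm
    obtain ⟨e, rfl⟩ := card_eq_one.mp (by have := hL.card_add_three; omega : #E = 1)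
    rw [eq_mk_of_mem_sym2_pair (hL.subset_sym2 (mem_singleton_self e))
      (hL.not_isDiag e (mem_singleton_self e))]
    exact hasTreeSplit_pair huv
  obtain ⟨w, hwS, hwu, hwv, hdeg⟩ := hL.exists_card_filter_mem_le_three h3 hu hv huv
  have hdeg2 := hL.two_le_card_filter_mem h3 hwS
  have hu' : u ∈ S.erase w := mem_erase.mpr ⟨hwu.symm, hu⟩
  have hv' : v ∈ S.erase w := mem_erase.mpr ⟨hwv.symm, hv⟩
  have hwE {E' : Finset (Sym2 V)} (hL' : IsLamanOn (S.erase w) E') : ∀ e ∈ E', w ∉ e :=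
    fun e he => (mem_sym2_erase_iff.mp (hL'.subset_sym2 he)).2
  rw [← insert_erase hwS]
  rcases (by omega : #{e ∈ E | w ∈ e} = 2 ∨ #{e ∈ E | w ∈ e} = 3) with hdeg | hdeg
  · obtain ⟨x, y, hxy, hwx, hwy⟩ := exists_mk_mem_of_card_filter_mem_eq_two hL.subset_sym2 hdeg
    have hL' := hL.erase hwS hdeg
    exact (ih _ (erase_ssubset hwS) hL' hu' hv').insert_two inter_subset_left (hwE hL')
      (notMem_erase w S) (hL.mem_erase_of_mk_mem hwx) (hL.mem_erase_of_mk_mem hwy) hxy hwx hwy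
  · obtain ⟨a, b, c, hab, hac, hbc, hwa, hwb, hwc⟩ :=
      exists_mk_mem_of_card_filter_mem_eq_three hL.subset_sym2 hdeg
    have ha := hL.mem_erase_of_mk_mem hwa
    have hb := hL.mem_erase_of_mk_mem hwb
    have hc := hL.mem_erase_of_mk_mem hwc
    have hsplit {E'} (hL' : IsLamanOn (S.erase w) E') := ih _ (erase_ssubset hwS) hL' hu' hv'
    rcases hL.erase_insert hwS hdeg hab hac hbc hwa hwb hwc with h | h | h
    · exact (hsplit h).insert_three inter_subset_left (hwE h) (notMem_erase w S) ha hc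
        hab hac hbc hwa hwb hwc
    · exact (hsplit h).insert_three inter_subset_left (hwE h) (notMem_erase w S) ha hb
        hac hab hbc.symm hwa hwc hwb
    · exact (hsplit h).insert_three inter_subset_left (hwE h) (notMem_erase w S) hb ha
        hbc hab.symm hac.symm hwb hwc hwa

end TreeSplit

lemma isLamanOn_univ_edgeFinset {V : Type} [Fintype V] [DecidableEq V] {G : SimpleGraph V}
    [Fintype G.edgeSet] (hG : MaxIndep3 G) : IsLamanOn univ G.edgeFinset where
  subset_sym2 := by simp
  not_isDiag e he := G.not_isDiag_of_mem_edgeSet (mem_edgeFinset.mp he)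
  isSparse X _ hX := by
    rcases (G.edgeFinset ∩ X.sym2).eq_empty_or_nonempty with h | h
    · rw [h, card_empty]
      omega
    have := hG.1 _ (by rwa [edgeSet_induce_top_coe, coe_nonempty])
    rw [subFreedom, Subgraph.induce_verts, Set.ncard_coe_finset, edgeSet_induce_top_coe,
      Set.ncard_coe_finset] at this
    omega
  card_add_three := by
    have := hG.2
    rw [gFreedom, Set.ncard_univ, Nat.card_eq_fintype_card, ← coe_edgeFinset,
      Set.ncard_coe_finset] at this
    rw [card_univ]
    omega

theorem maxIndep3_addEdge_twoSpanningTrees_general {V : Type} [Fintype V]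
    (G : SimpleGraph V) (hG : MaxIndep3 G)
    (u v : V) (huv : u ≠ v) (hadj : ¬ G.Adj u v) :
    TwoSpanningTrees (SimpleGraph.fromEdgeSet (insert s(u, v) G.edgeSet)) := by
  classical
  have hL := isLamanOn_univ_edgeFinset hG
  obtain ⟨T, hTE, hTc, hT, hF⟩ := hL.hasTreeSplit (mem_univ u) (mem_univ v) huv
  have hcard := hL.card_add_three
  rw [card_univ] at hcard hTc
  have huvE : s(u, v) ∉ G.edgeFinset := by simpa using hadj
  have hloop : ∀ e ∈ insert s(u, v) G.edgeFinset, ¬ e.IsDiag := by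
    simp only [forall_mem_insert, Sym2.mk_isDiag_iff]
    exact ⟨huv, hL.not_isDiag⟩
  refine ⟨T, ↑(insert s(u, v) (G.edgeFinset \ T)), ?_, ?_,
    isTree_fromEdgeSet hT (fun e he => hL.not_isDiag e (hTE he)) hTc,
    isTree_fromEdgeSet hF (fun e he => hloop e (insert_subset_insert _ sdiff_subset he)) ?_⟩
  · rw [← G.coe_edgeFinset, ← coe_insert, edgeSet_fromEdgeSet_of_forall_not_isDiag hloop,
      ← coe_union, union_insert, union_sdiff_of_subset hTE]
  · rw [disjoint_coe, disjoint_insert_right]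
    exact ⟨fun h => huvE (hTE h), disjoint_sdiff⟩
  · have := card_le_card hTE
    rw [card_insert_of_notMem (by simp [huvE]), card_sdiff_of_subset hTE]
    omega

/-- If `G` is a finite connected graph which is maximally
independent of type 3 and `u`, `v` are distinct nonadjacent vertices, then the
graph obtained from `G` by adding the edge `(u,v)` is an edge-disjoint union of
two spanning trees. -/
theorem maxIndep3_addEdge_twoSpanningTrees {V : Type} [Fintype V]
    (G : SimpleGraph V) (hconn : G.Connected) (hG : MaxIndep3 G)
    (u v : V) (huv : u ≠ v) (hadj : ¬ G.Adj u v) :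
    TwoSpanningTrees (SimpleGraph.fromEdgeSet (insert s(u, v) G.edgeSet)) :=
  maxIndep3_addEdge_twoSpanningTrees_general G hG u v huv hadj
end
end
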